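/- arXiv:1702.08076 — 5 statements merged into one kernel-verified Lean document; each statement's English description precedes it below -/
import Mathlib

section
/- Let A, G : E → E be maps such that Av ≥ 0 and Gv ≥ 0 for all 0 ≤ v ∈ E, ‖Av − Aw‖ ≤ κ‖v − w‖ for all nonnegative v, w ∈ E and some κ > 0, and for some κ₀ > 0, ‖Gv − Gw‖ ≤ e^{κ₀ r}‖v − w‖ for all v, w ∈ E_r^+ and all r > 0. Then for any T > 0, m > 0 and any 0 ≤ u₀ ∈ E there exists a unique nonnegative classical solution u ∈ C([0,T] → E) ∩ C¹((0,T] → E) of the equation ∂u/∂t(x,t) = (Au)(x,t) − m u(x,t) − u(x,t)(Gu)(x,t) with u(·,0) = u₀. -/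
open MeasureTheory Filter Topology
open scoped RealInnerProductSpace

noncomputable section

/-- Euclidean space `ℝ^d`. -/
abbrev EucSp (d : ℕ) := EuclideanSpace ℝ (Fin d)

/-- The Banach space `E = C_b(ℝ^d)` of bounded continuous functions with sup-norm. -/
abbrev BCF (d : ℕ) := BoundedContinuousFunction (EucSp d) ℝ

variable {d : ℕ}

/-- Convolution `(a ∗ v)(x) = ∫ a(x − y) v(y) dy`. -/
def convol (a v : EucSp d → ℝ) (x : EucSp d) : ℝ := ∫ y, a (x - y) * v y

/-- Membership in the tube `E_r^+ = {v ∈ E : 0 ≤ v ≤ r}`. -/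
def memTube (r : ℝ) (v : BCF d) : Prop := ∀ x, 0 ≤ v x ∧ v x ≤ r

/-- `u` is a classical solution of `∂ₜ u = κ a∗u − m u − u · Gu` on `[0, T]`:
`u ∈ C([0,T] → E) ∩ C¹((0,T] → E)` and the equation holds on `(0,T]`. -/
def IsSolOn (a : EucSp d → ℝ) (κ m : ℝ) (G : BCF d → BCF d) (T : ℝ)
    (u : ℝ → BCF d) : Prop :=
  ContinuousOn u (Set.Icc 0 T) ∧
    ∃ u' : ℝ → BCF d, ContinuousOn u' (Set.Ioc 0 T) ∧
      ∀ t ∈ Set.Ioc (0 : ℝ) T,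
        HasDerivWithinAt u (u' t) (Set.Ioc 0 T) t ∧
          ∀ x, u' t x = κ * convol a (⇑(u t)) x - m * u t x - u t x * G (u t) x

/-- `u` is a classical solution of `∂ₜ u = κ a∗u − m u − u · Gu` on `[0, ∞)`. -/
def IsSolGlobal (a : EucSp d → ℝ) (κ m : ℝ) (G : BCF d → BCF d)
    (u : ℝ → BCF d) : Prop :=
  ContinuousOn u (Set.Ici 0) ∧
    ∃ u' : ℝ → BCF d, ContinuousOn u' (Set.Ioi 0) ∧
      ∀ t ∈ Set.Ioi (0 : ℝ),
        HasDerivWithinAt u (u' t) (Set.Ioi 0) t ∧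
          ∀ x, u' t x = κ * convol a (⇑(u t)) x - m * u t x - u t x * G (u t) x

/-- `u` is a classical solution of the generalized equation
`∂ₜ u = Au − m u − u · Gu` on `[0, T]`. -/
def IsSolOnGen (A G : BCF d → BCF d) (m T : ℝ) (u : ℝ → BCF d) : Prop :=
  ContinuousOn u (Set.Icc 0 T) ∧
    ∃ u' : ℝ → BCF d, ContinuousOn u' (Set.Ioc 0 T) ∧
      ∀ t ∈ Set.Ioc (0 : ℝ) T,
        HasDerivWithinAt u (u' t) (Set.Ioc 0 T) t ∧
          ∀ x, u' t x = A (u t) x - m * u t x - u t x * G (u t) x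

/-- Membership in `Y_T = C([0,T] → E) ∩ C¹((0,T] → E)`, with derivative `u'`. -/
def MemY (T : ℝ) (u u' : ℝ → BCF d) : Prop :=
  ContinuousOn u (Set.Icc 0 T) ∧ ContinuousOn u' (Set.Ioc 0 T) ∧
    ∀ t ∈ Set.Ioc (0 : ℝ) T, HasDerivWithinAt u (u' t) (Set.Ioc 0 T) t

/-- The truncation `0 ∨ u ∧ r` of `u ∈ E`. -/
def truncate (u : BCF d) (r : ℝ) : BCF d :=
  BoundedContinuousFunction.ofNormedAddCommGroup
    (fun x => max 0 (min (u x) r))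
    (continuous_const.max (u.continuous.min continuous_const)) |r|
    (fun x => by
      rw [Real.norm_eq_abs, abs_of_nonneg (le_max_left 0 _)]
      exact max_le (abs_nonneg r) ((min_le_right _ _).trans (le_abs_self r)))

/-- The translation operator `(T_y v)(x) = v(x − y)` on `E`. -/
def translateBCF (v : BCF d) (y : EucSp d) : BCF d :=
  v.compContinuous ⟨fun x => x - y, by continuity⟩

/-- (A1): `m > 0` and `β := κ − m > 0`. -/
def assumA1 (κ m : ℝ) : Prop := 0 < m ∧ m < κ

/-- (A2): `0 = G0 ≤ Gv ≤ Gθ = β` for all `v ∈ E_θ^+`, with `θ > 0`. -/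
def assumA2 (G : BCF d → BCF d) (κ m θ : ℝ) : Prop :=
  0 < θ ∧ G 0 = 0 ∧ (∀ x, G (BoundedContinuousFunction.const (EucSp d) θ) x = κ - m) ∧
    ∀ v : BCF d, memTube θ v → ∀ x, 0 ≤ G v x ∧ G v x ≤ κ - m

/-- (A3): `G` is Lipschitz continuous on `E_θ^+`. -/
def assumA3 (G : BCF d → BCF d) (θ : ℝ) : Prop :=
  ∃ l > (0 : ℝ), ∀ v w : BCF d, memTube θ v → memTube θ w → ‖G v - G w‖ ≤ l * ‖v - w‖

/-- (A4): quasi-monotonicity of the right-hand side of the equation. -/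
def assumA4 (a : EucSp d → ℝ) (κ : ℝ) (G : BCF d → BCF d) (θ : ℝ) : Prop :=
  ∃ p ≥ (0 : ℝ), ∀ v w : BCF d, memTube θ v → memTube θ w → (∀ x, v x ≤ w x) →
    ∀ x, κ * convol a (⇑v) x - v x * G v x + p * v x ≤
      κ * convol a (⇑w) x - w x * G w x + p * w x

/-- (A5): the kernel `a` is non-degenerate at the origin. -/
def assumA5 (a : EucSp d → ℝ) : Prop :=
  ∃ ϱ > (0 : ℝ), ∀ᵐ (x : EucSp d) ∂volume, x ∈ Metric.ball (0 : EucSp d) ϱ → ϱ ≤ a x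

/-- (A6): `G` is continuous on `E_θ^+` for locally uniform convergence. -/
def assumA6 (G : BCF d → BCF d) (θ : ℝ) : Prop :=
  ∀ (vn : ℕ → BCF d) (v : BCF d), (∀ n, memTube θ (vn n)) → memTube θ v →
    TendstoLocallyUniformly (fun n => ⇑(vn n)) (⇑v) atTop →
    TendstoLocallyUniformly (fun n => ⇑(G (vn n))) (⇑(G v)) atTop

/-- (A7): `G` commutes with all translations. -/
def assumA7 (G : BCF d → BCF d) (θ : ℝ) : Prop :=
  ∀ v : BCF d, memTube θ v → ∀ y, G (translateBCF v y) = translateBCF (G v) y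

/-- (A8): `Gr < β` for all constant functions `r ∈ (0, θ)`. -/
def assumA8 (G : BCF d → BCF d) (κ m θ : ℝ) : Prop :=
  ∀ r : ℝ, 0 < r → r < θ →
    ∀ x, G (BoundedContinuousFunction.const (EucSp d) r) x < κ - m

/-- (A9): the kernel `a` has a finite first moment. -/
def assumA9 (a : EucSp d → ℝ) : Prop := Integrable (fun y => ‖y‖ * a y)

/-- (A10): there are `q ≥ 0`, `δ > 0` and a smooth bounded `0 ≤ b` with
`a − b ≥ δ 1_{B_δ(0)}` and `w · Gw ≤ κ b∗w + q w` on `E_θ^+`. -/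
def assumA10 (a : EucSp d → ℝ) (κ : ℝ) (G : BCF d → BCF d) (θ : ℝ) : Prop :=
  ∃ q ≥ (0 : ℝ), ∃ δ > (0 : ℝ), ∃ b : EucSp d → ℝ,
    (∀ x, 0 ≤ b x) ∧ (∀ n : ℕ, ContDiff ℝ n b) ∧ (∃ C, ∀ x, b x ≤ C) ∧
    (∀ x, (Metric.ball (0 : EucSp d) δ).indicator (fun _ => δ) x ≤ a x - b x) ∧
    ∀ w : BCF d, memTube θ w → ∀ x, w x * G w x ≤ κ * convol b (⇑w) x + q * w x


/-! Truncating onto the tube `E_R^+` turns the right-hand side into a globally Lipschitz vector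
field on `E`, so the truncated problem is uniquely solvable on `[0, T]`. Its solution stays
nonnegative, because where `u(x) < 0` the truncated field equals `(A (0 ∨ u ∧ R))(x) ≥ 0`.
Every nonnegative solution of either problem satisfies `∂ₜu ≤ ‖A 0‖ + κ‖u‖`, hence stays below the
Grönwall bound on `[0, T]`; once `R` exceeds that bound the truncation acts as the identity along
such solutions, which yields existence for the original equation and, through uniqueness for the
Lipschitz problem, uniqueness. -/

open Set
open scoped NNReal BoundedContinuousFunction

section ODE

variable {E : Type*} [NormedAddCommGroup E] [NormedSpace ℝ E] {F : E → E} {K : ℝ≥0}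

theorem hasDerivWithinAt_Icc_piecewise {u v : ℝ → E} {a b c : ℝ}
    (hab : a ≤ b) (hbc : b ≤ c)
    (hu : ∀ t ∈ Icc a b, HasDerivWithinAt u (F (u t)) (Icc a b) t)
    (hv : ∀ t ∈ Icc b c, HasDerivWithinAt v (F (v t)) (Icc b c) t) (huv : u b = v b) :
    ∀ t ∈ Icc a c, HasDerivWithinAt (fun s ↦ if s ≤ b then u s else v s)
      (F (if t ≤ b then u t else v t)) (Icc a c) t := by
  set w : ℝ → E := fun s ↦ if s ≤ b then u s else v s
  have hwu : ∀ s ∈ Icc a b, w s = u s := fun s hs ↦ if_pos hs.2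
  have hwv : ∀ s ∈ Icc b c, w s = v s := fun s hs ↦ by
    rcases hs.1.eq_or_lt with rfl | hbs
    · exact (if_pos le_rfl).trans huv
    · exact if_neg hbs.not_ge
  intro t _
  change HasDerivWithinAt w (F (w t)) (Icc a c) t
  rw [← Icc_union_Icc_eq_Icc hab hbc]
  refine HasDerivWithinAt.union ?_ ?_
  · by_cases ht : t ∈ Icc a b
    · rw [hwu t ht]; exact (hu t ht).congr_of_mem hwu ht
    · exact HasFDerivWithinAt.of_notMem_closure (by rwa [closure_Icc])
  · by_cases ht : t ∈ Icc b c
    · rw [hwv t ht]; exact (hv t ht).congr_of_mem hwv ht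
    · exact HasFDerivWithinAt.of_notMem_closure (by rwa [closure_Icc])

theorem LipschitzWith.eqOn_Icc_of_hasDerivAt_Ioo (hF : LipschitzWith K F) {u v : ℝ → E}
    {a b : ℝ} (hu : ContinuousOn u (Icc a b)) (hu' : ∀ t ∈ Ioo a b, HasDerivAt u (F (u t)) t)
    (hv : ContinuousOn v (Icc a b)) (hv' : ∀ t ∈ Ioo a b, HasDerivAt v (F (v t)) t)
    (ha : u a = v a) : EqOn u v (Icc a b) := by
  intro t ht
  rcases ht.1.eq_or_lt with rfl | hat
  · exact ha
  -- Grönwall on `[s, t]` for every `s ∈ (a, t)`, then `s → a`.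
  have hbound : ∀ s ∈ Ioo a t, dist (u t) (v t) ≤ dist (u s) (v s) * Real.exp (K * (t - s)) := by
    intro s hs
    have hsub : Icc s t ⊆ Icc a b := Icc_subset_Icc hs.1.le ht.2
    have hsub' : Ico s t ⊆ Ioo a b := fun r hr ↦ ⟨hs.1.trans_le hr.1, hr.2.trans_le ht.2⟩
    exact dist_le_of_trajectories_ODE (v := fun _ ↦ F) (fun _ ↦ hF) (hu.mono hsub)
      (fun r hr ↦ (hu' r (hsub' hr)).hasDerivWithinAt) (hv.mono hsub)
      (fun r hr ↦ (hv' r (hsub' hr)).hasDerivWithinAt) le_rfl t ⟨hs.2.le, le_rfl⟩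
  have hsub : Ioo a t ⊆ Icc a b := Ioo_subset_Icc_self.trans (Icc_subset_Icc_right ht.2)
  have ha_mem : a ∈ Icc a b := ⟨le_rfl, ht.1.trans ht.2⟩
  have hdist : ContinuousWithinAt (fun s ↦ dist (u s) (v s)) (Icc a b) a :=
    (hu a ha_mem).dist (hv a ha_mem)
  have hcont : ContinuousWithinAt (fun s ↦ dist (u s) (v s) * Real.exp (K * (t - s)))
      (Ioo a t) a :=
    (hdist.mono hsub).mul (by fun_prop)
  have ha_cl : a ∈ closure (Ioo a t) := by rw [closure_Ioo hat.ne]; exact left_mem_Icc.2 hat.le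
  simpa [ha] using continuousWithinAt_const.closure_le ha_cl hcont hbound

variable [CompleteSpace E]

theorem LipschitzWith.exists_hasDerivWithinAt_Icc_add (hF : LipschitzWith K F) (x₀ : E)
    (b : ℝ) {h : ℝ≥0} (hKh : 2 * K * h ≤ 1) :
    ∃ u : ℝ → E, u b = x₀ ∧
      ∀ t ∈ Icc b (b + h), HasDerivWithinAt u (F (u t)) (Icc b (b + h)) t := by
  -- On the ball of radius `a = 2h‖F x₀‖` the field is bounded by `‖F x₀‖ + K a ≤ a / h`.
  set a : ℝ≥0 := 2 * h * ‖F x₀‖₊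
  have hbound : ∀ x ∈ Metric.closedBall x₀ a, ‖F x‖ ≤ ‖F x₀‖₊ + K * a := fun x hx ↦ by
    have hx : ‖x - x₀‖ ≤ a := by rwa [← dist_eq_norm, ← Metric.mem_closedBall]
    calc ‖F x‖ ≤ ‖F x₀‖ + ‖F x - F x₀‖ := norm_le_insert' _ _
      _ ≤ ‖F x₀‖ + K * a := by gcongr; exact (hF.norm_sub_le x x₀).trans (by gcongr)
  have hpl : IsPicardLindelof (fun _ ↦ F) (tmin := b) (tmax := b + h) ⟨b, by simp⟩ x₀ a 0
      (‖F x₀‖₊ + K * a) K := by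
    refine IsPicardLindelof.of_time_independent hbound hF.lipschitzOnWith ?_
    simp only [add_sub_cancel_left, sub_self, NNReal.coe_zero, sub_zero]
    rw [max_eq_left (by positivity)]
    have : (K : ℝ) * h * 2 ≤ 1 := by exact_mod_cast (by linarith [hKh] : K * h * 2 ≤ 1)
    push_cast [a]
    nlinarith [mul_nonneg (sub_nonneg.2 this) (mul_nonneg h.coe_nonneg (norm_nonneg (F x₀)))]
  exact hpl.exists_eq_forall_mem_Icc_hasDerivWithinAt₀

theorem LipschitzWith.exists_hasDerivWithinAt_Icc (hF : LipschitzWith K F) (x₀ : E) (T : ℝ) :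
    ∃ u : ℝ → E, u 0 = x₀ ∧ ∀ t ∈ Icc 0 T, HasDerivWithinAt u (F (u t)) (Icc 0 T) t := by
  set h : ℝ≥0 := (2 * K + 1)⁻¹
  have hh : 0 < (h : ℝ) := by positivity
  have hKh : 2 * K * h ≤ 1 := by
    rw [← div_eq_mul_inv, div_le_one (by positivity)]; exact le_self_add
  have hsteps : ∀ n : ℕ, ∃ u : ℝ → E, u 0 = x₀ ∧
      ∀ t ∈ Icc 0 ((n : ℝ) * h), HasDerivWithinAt u (F (u t)) (Icc 0 ((n : ℝ) * h)) t := by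
    intro n
    induction n with
    | zero => simpa using hF.exists_hasDerivWithinAt_Icc_add x₀ 0 (h := 0) (by simp)
    | succ n ih =>
      obtain ⟨u, hu0, hu⟩ := ih
      obtain ⟨v, hvb, hv⟩ := hF.exists_hasDerivWithinAt_Icc_add (u (n * h)) (n * h) hKh
      refine ⟨fun s ↦ if s ≤ n * h then u s else v s,
        (if_pos (by positivity : (0 : ℝ) ≤ n * h)).trans hu0, ?_⟩
      push_cast
      rw [add_one_mul]
      exact hasDerivWithinAt_Icc_piecewise (by positivity) (by simp) hu hv hvb.symm
  obtain ⟨n, hn⟩ := exists_nat_ge (T / h)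
  have hTn : T ≤ n * h := (div_le_iff₀ hh).1 hn
  obtain ⟨u, hu0, hu⟩ := hsteps n
  exact ⟨u, hu0, fun t ht ↦
    (hu t ⟨ht.1, ht.2.trans hTn⟩).mono (Icc_subset_Icc_right hTn)⟩

end ODE

theorem nonneg_of_hasDerivAt_nonneg_of_neg {f f' : ℝ → ℝ} {a b : ℝ}
    (hf : ContinuousOn f (Icc a b)) (hf' : ∀ t ∈ Ioo a b, HasDerivAt f (f' t) t)
    (hneg : ∀ t ∈ Ioo a b, f t < 0 → 0 ≤ f' t) (ha : 0 ≤ f a) :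
    ∀ t ∈ Icc a b, 0 ≤ f t := by
  intro t ht
  by_contra! hft
  -- `f` is nondecreasing from the last time `s ≤ t` with `0 ≤ f s` up to `t`.
  set S := Icc a t ∩ f ⁻¹' Ici 0
  have hS_closed : IsClosed S := (hf.mono (Icc_subset_Icc_right ht.2)).preimage_isClosed_of_isClosed
    isClosed_Icc isClosed_Ici
  have hS_bdd : BddAbove S := ⟨t, fun r hr ↦ hr.1.2⟩
  obtain ⟨⟨has, hst⟩, hfs⟩ : sSup S ∈ S :=
    hS_closed.csSup_mem ⟨a, left_mem_Icc.2 ht.1, ha⟩ hS_bdd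
  have hf_neg : ∀ r ∈ Ioo (sSup S) t, f r < 0 := fun r hr ↦ not_le.1 fun h ↦
    hr.1.not_ge (le_csSup hS_bdd ⟨⟨has.trans hr.1.le, hr.2.le⟩, h⟩)
  have hsub : Ioo (sSup S) t ⊆ Ioo a b := Ioo_subset_Ioo has ht.2
  have hmono : MonotoneOn f (Icc (sSup S) t) := by
    refine monotoneOn_of_hasDerivWithinAt_nonneg (f' := f') (convex_Icc _ _)
      (hf.mono (Icc_subset_Icc has ht.2)) (fun r hr ↦ ?_) (fun r hr ↦ ?_)
    · rw [interior_Icc] at hr; exact (hf' r (hsub hr)).hasDerivWithinAt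
    · rw [interior_Icc] at hr; exact hneg r (hsub hr) (hf_neg r hr)
  exact hft.not_ge (hfs.trans (hmono ⟨le_rfl, hst⟩ ⟨hst, le_rfl⟩ hst))

theorem BoundedContinuousFunction.hasDerivAt_apply {α : Type*} [TopologicalSpace α]
    {u : ℝ → α →ᵇ ℝ} {u' : α →ᵇ ℝ} {t : ℝ} (hu : HasDerivAt u u' t) (x : α) :
    HasDerivAt (fun s ↦ u s x) (u' x) t :=
  ((evalCLM ℝ x).hasFDerivAt.comp_hasDerivAt t hu :)

theorem BoundedContinuousFunction.norm_le_add_integral_of_apply_deriv_le {α : Type*}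
    [TopologicalSpace α] {u u' : ℝ → α →ᵇ ℝ} {φ : ℝ → ℝ} {a b : ℝ} (hφ : Continuous φ)
    (hφ₀ : ∀ t, 0 ≤ φ t) (hu : ContinuousOn u (Icc a b))
    (hu' : ∀ t ∈ Ioo a b, HasDerivAt u (u' t) t) (hnonneg : ∀ t ∈ Icc a b, ∀ x, 0 ≤ u t x)
    (hle : ∀ t ∈ Ioo a b, ∀ x, u' t x ≤ φ t) :
    ∀ t ∈ Icc a b, ‖u t‖ ≤ ‖u a‖ + ∫ r in a..t, φ r := by
  intro t ht
  have hI : ∀ s, HasDerivAt (fun s ↦ ∫ r in a..s, φ r) (φ s) s := fun s ↦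
    (hφ.integral_hasStrictDerivAt a s).hasDerivAt
  refine (norm_le (add_nonneg (norm_nonneg _)
    (intervalIntegral.integral_nonneg ht.1 fun r _ ↦ hφ₀ r))).2 fun x ↦ ?_
  rw [Real.norm_eq_abs, abs_of_nonneg (hnonneg t ht x)]
  have hmono : MonotoneOn (fun s ↦ (∫ r in a..s, φ r) - u s x) (Icc a b) := by
    refine monotoneOn_of_hasDerivWithinAt_nonneg (f' := fun s ↦ φ s - u' s x) (convex_Icc a b)
      ((continuous_iff_continuousAt.2 fun s ↦ (hI s).continuousAt).continuousOn.sub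
        ((continuous_eval_const x).comp_continuousOn hu)) (fun s hs ↦ ?_) (fun s hs ↦ ?_)
    all_goals rw [interior_Icc] at hs
    · exact ((hI s).sub (hasDerivAt_apply (hu' s hs) x)).hasDerivWithinAt
    · exact sub_nonneg.2 (hle s hs x)
  have hu_t : 0 - u a x ≤ (∫ r in a..t, φ r) - u t x := by
    simpa using hmono (left_mem_Icc.2 (ht.1.trans ht.2)) ht ht.1
  have hu_a : u a x ≤ ‖u a‖ := (le_abs_self _).trans ((u a).norm_coe_le_norm x)
  linarith

theorem BoundedContinuousFunction.norm_le_gronwallBound_of_apply_deriv_le {α : Type*}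
    [TopologicalSpace α] {u u' : ℝ → α →ᵇ ℝ} {a b C κ : ℝ} (hC : 0 ≤ C) (hκ : 0 ≤ κ)
    (hu : ContinuousOn u (Icc a b)) (hu' : ∀ t ∈ Ioo a b, HasDerivAt u (u' t) t)
    (hnonneg : ∀ t ∈ Icc a b, ∀ x, 0 ≤ u t x)
    (hle : ∀ t ∈ Ioo a b, ∀ x, u' t x ≤ C + κ * ‖u t‖) :
    ∀ t ∈ Icc a b, ‖u t‖ ≤ gronwallBound ‖u a‖ κ C (t - a) := by
  intro t ht
  -- `ψ` extends `‖u ·‖` continuously beyond `[a, b]`, so that `g = ‖u a‖ + ∫ₐ (C + κ ψ)` is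
  -- differentiable everywhere; it dominates `‖u ·‖` and satisfies `g' ≤ C + κ g` on `[a, b]`.
  set ψ : ℝ → ℝ := IccExtend (ht.1.trans ht.2) fun s ↦ ‖u s‖
  have hψ : Continuous ψ := (continuous_norm.comp hu.domRestrict).Icc_extend'
  have hψu : ∀ s ∈ Icc a b, ψ s = ‖u s‖ := fun s hs ↦ IccExtend_of_mem _ _ hs
  have hφ : Continuous fun r ↦ C + κ * ψ r := by fun_prop
  have hug := norm_le_add_integral_of_apply_deriv_le hφ
    (fun r ↦ add_nonneg hC (mul_nonneg hκ (norm_nonneg _))) hu hu' hnonneg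
    fun s hs x ↦ (hψu s (Ioo_subset_Icc_self hs)).symm ▸ hle s hs x
  set g : ℝ → ℝ := fun s ↦ ‖u a‖ + ∫ r in a..s, (C + κ * ψ r)
  have hg' : ∀ s, HasDerivAt g (C + κ * ψ s) s := fun s ↦
    (hφ.integral_hasStrictDerivAt a s).hasDerivAt.const_add _
  calc ‖u t‖ ≤ g t := hug t ht
    _ ≤ gronwallBound ‖u a‖ κ C (t - a) := by
      refine le_gronwallBound_of_liminf_deriv_right_le
        (continuous_iff_continuousAt.2 fun s ↦ (hg' s).continuousAt).continuousOn
        (fun s _ r hr ↦ (hg' s).hasDerivWithinAt.liminf_right_slope_le hr) (by simp [g])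
        (fun s hs ↦ ?_) t ht
      rw [hψu s (Ico_subset_Icc_self hs)]
      linarith [mul_le_mul_of_nonneg_left (hug s (Ico_subset_Icc_self hs)) hκ]

theorem truncate_apply (v : BCF d) (r : ℝ) (x : EucSp d) :
    truncate v r x = max 0 (min (v x) r) := rfl

theorem memTube_truncate (v : BCF d) {r : ℝ} (hr : 0 ≤ r) : memTube r (truncate v r) :=
  fun _ ↦ ⟨le_max_left _ _, max_le hr (min_le_right _ _)⟩

theorem truncate_eq_self {v : BCF d} {r : ℝ} (hv : memTube r v) : truncate v r = v := by
  ext x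
  rw [truncate_apply, min_eq_left (hv x).2, max_eq_right (hv x).1]

theorem truncate_apply_of_neg (v : BCF d) {r : ℝ} (hr : 0 ≤ r) {x : EucSp d} (hx : v x < 0) :
    truncate v r x = 0 := by
  rw [truncate_apply, min_eq_left (hx.le.trans hr), max_eq_left hx.le]

theorem lipschitzWith_truncate (r : ℝ) : LipschitzWith 1 fun v : BCF d ↦ truncate v r := by
  have hclamp := (LipschitzWith.id.min_const r).const_max 0
  refine LipschitzWith.of_dist_le_mul fun v w ↦
    (BoundedContinuousFunction.dist_le (by positivity)).2 fun x ↦ ?_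
  calc dist (truncate v r x) (truncate w r x) ≤ 1 * dist (v x) (w x) := hclamp.dist_le_mul _ _
    _ ≤ 1 * dist v w := by gcongr; exact v.dist_coe_le_dist x

theorem norm_truncate_le (v : BCF d) {r : ℝ} (hr : 0 ≤ r) : ‖truncate v r‖ ≤ ‖v‖ := by
  have h0 : truncate (0 : BCF d) r = 0 := truncate_eq_self fun _ ↦ ⟨le_rfl, hr⟩
  simpa [h0] using (lipschitzWith_truncate r).norm_sub_le v 0

theorem memTube_of_norm_le {v : BCF d} {r : ℝ} (hv : ∀ x, 0 ≤ v x) (hr : ‖v‖ ≤ r) :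
    memTube r v :=
  fun x ↦ ⟨hv x, (le_abs_self _).trans ((v.norm_coe_le_norm x).trans hr)⟩

theorem norm_le_of_memTube {v : BCF d} {r : ℝ} (hv : memTube r v) (hr : 0 ≤ r) : ‖v‖ ≤ r :=
  (BoundedContinuousFunction.norm_le hr).2 fun x ↦ by
    rw [Real.norm_eq_abs, abs_of_nonneg (hv x).1]; exact (hv x).2

theorem memTube_of_apply_deriv_le {u u' : ℝ → BCF d} {a b C κ R : ℝ} (hC : 0 ≤ C) (hκ : 0 ≤ κ)
    (hu : ContinuousOn u (Icc a b)) (hu' : ∀ t ∈ Ioo a b, HasDerivAt u (u' t) t)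
    (hnonneg : ∀ t ∈ Icc a b, ∀ x, 0 ≤ u t x)
    (hle : ∀ t ∈ Ioo a b, ∀ x, u' t x ≤ C + κ * ‖u t‖)
    (hR : gronwallBound ‖u a‖ κ C (b - a) ≤ R) : ∀ t ∈ Icc a b, memTube R (u t) := fun t ht ↦
  memTube_of_norm_le (hnonneg t ht) <|
    (BoundedContinuousFunction.norm_le_gronwallBound_of_apply_deriv_le hC hκ hu hu' hnonneg hle
      t ht).trans <| (gronwallBound_mono (norm_nonneg _) hC hκ (by linarith [ht.2])).trans hR

theorem LipschitzOnWith.norm_le_norm_zero_add {E F : Type*} [SeminormedAddCommGroup E]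
    [SeminormedAddCommGroup F] {f : E → F} {K : ℝ≥0} {s : Set E} (hf : LipschitzOnWith K f s)
    (h0 : 0 ∈ s) {x : E} (hx : x ∈ s) : ‖f x‖ ≤ ‖f 0‖ + K * ‖x‖ :=
  calc ‖f x‖ ≤ ‖f 0‖ + ‖f x - f 0‖ := norm_le_insert' _ _
    _ ≤ ‖f 0‖ + K * ‖x‖ := by simpa using hf.norm_sub_le hx h0

theorem LipschitzOnWith.mul_of_norm_le {α R : Type*} [PseudoMetricSpace α] [SeminormedRing R]
    {f g : α → R} {s : Set α} {Kf Kg Cf Cg : ℝ≥0} (hf : LipschitzOnWith Kf f s)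
    (hg : LipschitzOnWith Kg g s) (hfC : ∀ x ∈ s, ‖f x‖ ≤ Cf) (hgC : ∀ x ∈ s, ‖g x‖ ≤ Cg) :
    LipschitzOnWith (Kf * Cg + Cf * Kg) (fun x ↦ f x * g x) s := by
  refine LipschitzOnWith.of_dist_le_mul fun x hx y hy ↦ ?_
  rw [dist_eq_norm, show f x * g x - f y * g y = (f x - f y) * g x + f y * (g x - g y) by
    noncomm_ring]
  calc ‖(f x - f y) * g x + f y * (g x - g y)‖
      ≤ ‖f x - f y‖ * ‖g x‖ + ‖f y‖ * ‖g x - g y‖ :=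
        (norm_add_le _ _).trans (add_le_add (norm_mul_le _ _) (norm_mul_le _ _))
    _ ≤ (Kf * dist x y) * Cg + Cf * (Kg * dist x y) := by
        rw [← dist_eq_norm, ← dist_eq_norm]
        gcongr
        exacts [hf.dist_le_mul x hx y hy, hgC x hx, hfC y hy, hg.dist_le_mul x hx y hy]
    _ = ↑(Kf * Cg + Cf * Kg) * dist x y := by push_cast; ring

section ReactionField

variable {A G : BCF d → BCF d} {m : ℝ}

def reactionField (A G : BCF d → BCF d) (m : ℝ) (v : BCF d) : BCF d := A v - m • v - v * G v

@[simp]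
theorem reactionField_apply (v : BCF d) (x : EucSp d) :
    reactionField A G m v x = A v x - m * v x - v x * G v x := by
  simp [reactionField]

theorem exists_lipschitzOnWith_reactionField {KA KG : ℝ≥0} {R : ℝ} (hR : 0 ≤ R)
    (hA : LipschitzOnWith KA A {v | memTube R v}) (hG : LipschitzOnWith KG G {v | memTube R v}) :
    ∃ K, LipschitzOnWith K (reactionField A G m) {v | memTube R v} := by
  have h0 : (0 : BCF d) ∈ {v | memTube R v} := fun _ ↦ ⟨le_rfl, hR⟩
  have hv : ∀ v : BCF d, memTube R v → ‖v‖ ≤ R.toNNReal := fun v hv ↦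
    (norm_le_of_memTube hv hR).trans (Real.le_coe_toNNReal R)
  have hGv : ∀ v : BCF d, memTube R v → ‖G v‖ ≤ ↑(‖G 0‖₊ + KG * R.toNNReal) := fun v hv' ↦
    (hG.norm_le_norm_zero_add h0 hv').trans (by push_cast; gcongr; exact hv v hv')
  exact ⟨_, (hA.sub (lipschitzWith_smul m).lipschitzOnWith).sub
    (LipschitzWith.id.lipschitzOnWith.mul_of_norm_le hG hv hGv)⟩

theorem exists_lipschitzWith_reactionField_truncate {KA KG : ℝ≥0} {R : ℝ} (hR : 0 ≤ R)
    (hA : LipschitzOnWith KA A {v | memTube R v}) (hG : LipschitzOnWith KG G {v | memTube R v}) :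
    ∃ K, LipschitzWith K fun v ↦ reactionField A G m (truncate v R) := by
  obtain ⟨K, hK⟩ := exists_lipschitzOnWith_reactionField (m := m) hR hA hG
  exact ⟨K * 1, lipschitzOnWith_univ.1 <| hK.comp (lipschitzWith_truncate R).lipschitzOnWith
    fun v _ ↦ memTube_truncate v hR⟩

theorem reactionField_truncate_apply_nonneg_of_neg
    (hApos : ∀ v : BCF d, (∀ x, 0 ≤ v x) → ∀ x, 0 ≤ A v x) {R : ℝ} (hR : 0 ≤ R) {v : BCF d}
    {x : EucSp d} (hx : v x < 0) : 0 ≤ reactionField A G m (truncate v R) x := by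
  rw [reactionField_apply, truncate_apply_of_neg v hR hx]
  simpa using hApos _ (fun y ↦ (memTube_truncate v hR y).1) x

theorem reactionField_apply_le {K : ℝ≥0} (hA : LipschitzOnWith K A {v | ∀ x, 0 ≤ v x})
    (hGpos : ∀ v : BCF d, (∀ x, 0 ≤ v x) → ∀ x, 0 ≤ G v x) (hm : 0 ≤ m) {v : BCF d}
    (hv : ∀ x, 0 ≤ v x) (x : EucSp d) : reactionField A G m v x ≤ ‖A 0‖ + K * ‖v‖ := by
  have hAv : A v x ≤ ‖A 0‖ + K * ‖v‖ := (le_abs_self _).trans <|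
    ((A v).norm_coe_le_norm x).trans (hA.norm_le_norm_zero_add (fun _ ↦ le_rfl) hv)
  rw [reactionField_apply]
  linarith [mul_nonneg hm (hv x), mul_nonneg (hv x) (hGpos v hv x)]

theorem reactionField_truncate_apply_le {K : ℝ≥0} (hA : LipschitzOnWith K A {v | ∀ x, 0 ≤ v x})
    (hGpos : ∀ v : BCF d, (∀ x, 0 ≤ v x) → ∀ x, 0 ≤ G v x) (hm : 0 ≤ m) {R : ℝ} (hR : 0 ≤ R)
    (v : BCF d) (x : EucSp d) : reactionField A G m (truncate v R) x ≤ ‖A 0‖ + K * ‖v‖ :=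
  (reactionField_apply_le hA hGpos hm (fun y ↦ (memTube_truncate v hR y).1) x).trans <| by
    gcongr; exact norm_truncate_le v hR

theorem IsSolOnGen.hasDerivAt {T : ℝ} {u : ℝ → BCF d} (hu : IsSolOnGen A G m T u) :
    ∀ t ∈ Ioo 0 T, HasDerivAt u (reactionField A G m (u t)) t := by
  obtain ⟨-, u', -, hu'⟩ := hu
  intro t ht
  obtain ⟨hderiv, heq⟩ := hu' t (Ioo_subset_Ioc_self ht)
  have hu't : u' t = reactionField A G m (u t) := by ext x; rw [heq x, reactionField_apply]
  exact hu't ▸ hderiv.hasDerivAt (Ioc_mem_nhds ht.1 ht.2)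

theorem isSolOnGen_of_hasDerivWithinAt {F : BCF d → BCF d} (hF : Continuous F) {T : ℝ}
    {u : ℝ → BCF d} (hu : ∀ t ∈ Icc 0 T, HasDerivWithinAt u (F (u t)) (Icc 0 T) t)
    (hFu : ∀ t ∈ Ioc 0 T, F (u t) = reactionField A G m (u t)) : IsSolOnGen A G m T u := by
  have hcont : ContinuousOn u (Icc 0 T) := fun t ht ↦ (hu t ht).continuousWithinAt
  refine ⟨hcont, fun t ↦ F (u t), hF.comp_continuousOn (hcont.mono Ioc_subset_Icc_self),
    fun t ht ↦ ⟨(hu t (Ioc_subset_Icc_self ht)).mono Ioc_subset_Icc_self, fun x ↦ ?_⟩⟩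
  simp only [hFu t ht, reactionField_apply]

theorem exists_nonneg_solution_reactionField_truncate {K : ℝ≥0} {R : ℝ} (hR : 0 ≤ R)
    (hF : LipschitzWith K fun v ↦ reactionField A G m (truncate v R))
    (hApos : ∀ v : BCF d, (∀ x, 0 ≤ v x) → ∀ x, 0 ≤ A v x) {u₀ : BCF d} (hu₀ : ∀ x, 0 ≤ u₀ x)
    (T : ℝ) : ∃ u : ℝ → BCF d, u 0 = u₀ ∧
      (∀ t ∈ Icc 0 T, HasDerivWithinAt u (reactionField A G m (truncate (u t) R)) (Icc 0 T) t) ∧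
      ∀ t ∈ Icc 0 T, ∀ x, 0 ≤ u t x := by
  obtain ⟨u, hu0, hu⟩ := hF.exists_hasDerivWithinAt_Icc u₀ T
  refine ⟨u, hu0, hu, fun t ht x ↦ ?_⟩
  refine nonneg_of_hasDerivAt_nonneg_of_neg (f := fun s ↦ u s x)
    ((continuous_eval_const x).comp_continuousOn fun s hs ↦ (hu s hs).continuousWithinAt)
    (fun s hs ↦ BoundedContinuousFunction.hasDerivAt_apply
      ((hu s (Ioo_subset_Icc_self hs)).hasDerivAt (Icc_mem_nhds hs.1 hs.2)) x)
    (fun s _ hs ↦ reactionField_truncate_apply_nonneg_of_neg hApos hR hs) (hu0 ▸ hu₀ x) t ht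

theorem IsSolOnGen.hasDerivAt_truncate {K : ℝ≥0} (hA : LipschitzOnWith K A {v | ∀ x, 0 ≤ v x})
    (hGpos : ∀ v : BCF d, (∀ x, 0 ≤ v x) → ∀ x, 0 ≤ G v x) (hm : 0 ≤ m) {T R : ℝ}
    {u : ℝ → BCF d} (hu : IsSolOnGen A G m T u) (hnonneg : ∀ t ∈ Icc 0 T, ∀ x, 0 ≤ u t x)
    (hR : gronwallBound ‖u 0‖ K ‖A 0‖ T ≤ R) :
    ∀ t ∈ Ioo 0 T, HasDerivAt u (reactionField A G m (truncate (u t) R)) t := by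
  have hu_tube := memTube_of_apply_deriv_le (R := R) (norm_nonneg _) K.coe_nonneg hu.1 hu.hasDerivAt
    hnonneg (fun t ht ↦ reactionField_apply_le hA hGpos hm (hnonneg t (Ioo_subset_Icc_self ht)))
    (by rwa [sub_zero])
  intro t ht
  rw [truncate_eq_self (hu_tube t (Ioo_subset_Icc_self ht))]
  exact hu.hasDerivAt t ht

theorem IsSolOnGen.eqOn {K KG : ℝ≥0} (hA : LipschitzOnWith K A {v | ∀ x, 0 ≤ v x})
    {R : ℝ} (hG : LipschitzOnWith KG G {v | memTube R v})
    (hGpos : ∀ v : BCF d, (∀ x, 0 ≤ v x) → ∀ x, 0 ≤ G v x) (hm : 0 ≤ m) (hR₀ : 0 ≤ R) {T : ℝ}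
    {u v : ℝ → BCF d} (hu : IsSolOnGen A G m T u) (hv : IsSolOnGen A G m T v)
    (hu_nonneg : ∀ t ∈ Icc 0 T, ∀ x, 0 ≤ u t x) (hv_nonneg : ∀ t ∈ Icc 0 T, ∀ x, 0 ≤ v t x)
    (h0 : u 0 = v 0) (hR : gronwallBound ‖u 0‖ K ‖A 0‖ T ≤ R) : EqOn u v (Icc 0 T) := by
  obtain ⟨_, hF⟩ := exists_lipschitzWith_reactionField_truncate (m := m) hR₀
    (hA.mono fun v hv x ↦ (hv x).1) hG
  exact hF.eqOn_Icc_of_hasDerivAt_Ioo hu.1 (hu.hasDerivAt_truncate hA hGpos hm hu_nonneg hR) hv.1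
    (hv.hasDerivAt_truncate hA hGpos hm hv_nonneg (h0 ▸ hR)) h0

theorem exists_isSolOnGen_nonneg {K KG : ℝ≥0} (hA : LipschitzOnWith K A {v | ∀ x, 0 ≤ v x})
    {R : ℝ} (hG : LipschitzOnWith KG G {v | memTube R v})
    (hApos : ∀ v : BCF d, (∀ x, 0 ≤ v x) → ∀ x, 0 ≤ A v x)
    (hGpos : ∀ v : BCF d, (∀ x, 0 ≤ v x) → ∀ x, 0 ≤ G v x) (hm : 0 ≤ m) (hR₀ : 0 ≤ R) {T : ℝ}
    {u₀ : BCF d} (hu₀ : ∀ x, 0 ≤ u₀ x) (hR : gronwallBound ‖u₀‖ K ‖A 0‖ T ≤ R) :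
    ∃ u : ℝ → BCF d, IsSolOnGen A G m T u ∧ u 0 = u₀ ∧ ∀ t ∈ Icc 0 T, ∀ x, 0 ≤ u t x := by
  obtain ⟨_, hF⟩ := exists_lipschitzWith_reactionField_truncate (m := m) hR₀
    (hA.mono fun v hv x ↦ (hv x).1) hG
  obtain ⟨u, hu0, hu, hu_nonneg⟩ :=
    exists_nonneg_solution_reactionField_truncate hR₀ hF hApos hu₀ T
  have hu_tube := memTube_of_apply_deriv_le (R := R) (norm_nonneg _) K.coe_nonneg
    (fun t ht ↦ (hu t ht).continuousWithinAt)
    (fun t ht ↦ (hu t (Ioo_subset_Icc_self ht)).hasDerivAt (Icc_mem_nhds ht.1 ht.2)) hu_nonneg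
    (fun t _ ↦ reactionField_truncate_apply_le hA hGpos hm hR₀ (u t)) (by rwa [hu0, sub_zero])
  refine ⟨u, isSolOnGen_of_hasDerivWithinAt hF.continuous hu fun t ht ↦ ?_, hu0, hu_nonneg⟩
  rw [truncate_eq_self (hu_tube t (Ioc_subset_Icc_self ht))]

end ReactionField

theorem statement1_general (d : ℕ) (m : ℝ) (hm : 0 < m)
    (A G : BCF d → BCF d)
    (hApos : ∀ v : BCF d, (∀ x, 0 ≤ v x) → ∀ x, 0 ≤ A v x)
    (hGpos : ∀ v : BCF d, (∀ x, 0 ≤ v x) → ∀ x, 0 ≤ G v x)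
    (κ : ℝ)
    (hAlip : ∀ v w : BCF d, (∀ x, 0 ≤ v x) → (∀ x, 0 ≤ w x) →
      ‖A v - A w‖ ≤ κ * ‖v - w‖)
    (κ₀ : ℝ)
    (hGlip : ∀ r > (0 : ℝ), ∀ v w : BCF d, memTube r v → memTube r w →
      ‖G v - G w‖ ≤ Real.exp (κ₀ * r) * ‖v - w‖)
    (T : ℝ) (hT : 0 < T) (u₀ : BCF d) (hu₀ : ∀ x, 0 ≤ u₀ x) :
    (∃ u : ℝ → BCF d, IsSolOnGen A G m T u ∧ u 0 = u₀ ∧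
      ∀ t ∈ Set.Icc (0 : ℝ) T, ∀ x, 0 ≤ u t x) ∧
    ∀ u v : ℝ → BCF d,
      IsSolOnGen A G m T u → u 0 = u₀ → (∀ t ∈ Set.Icc (0 : ℝ) T, ∀ x, 0 ≤ u t x) →
      IsSolOnGen A G m T v → v 0 = u₀ → (∀ t ∈ Set.Icc (0 : ℝ) T, ∀ x, 0 ≤ v t x) →
      Set.EqOn u v (Set.Icc 0 T) := by
  have hA : LipschitzOnWith κ.toNNReal A {v | ∀ x, 0 ≤ v x} :=
    .of_dist_le' fun v hv w hw ↦ by simpa only [dist_eq_norm] using hAlip v w hv hw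
  have hu₀_le : ‖u₀‖ ≤ gronwallBound ‖u₀‖ κ.toNNReal ‖A 0‖ T := by
    have := gronwallBound_mono (norm_nonneg u₀) (norm_nonneg (A 0)) κ.toNNReal.coe_nonneg hT.le
    rwa [gronwallBound_x0] at this
  set R := gronwallBound ‖u₀‖ κ.toNNReal ‖A 0‖ T + 1 with hR_def
  have hR : 0 < R := by linarith [norm_nonneg u₀]
  have hG : LipschitzOnWith (Real.exp (κ₀ * R)).toNNReal G {v | memTube R v} :=
    .of_dist_le' fun v hv w hw ↦ by simpa only [dist_eq_norm] using hGlip R hR v w hv hw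
  exact ⟨exists_isSolOnGen_nonneg hA hG hApos hGpos hm.le hR.le hu₀ (by linarith),
    fun u v hu hu0 hu_nonneg hv hv0 hv_nonneg ↦ hu.eqOn hA hG hGpos hm.le hR.le hv hu_nonneg
      hv_nonneg (hu0.trans hv0.symm) (by rw [hu0]; linarith)⟩

/-- Existence and uniqueness for the generalized equation `∂ₜu = Au − mu − u·Gu`
(Theorem `exist_uniq_BUC`). -/
theorem statement1 (d : ℕ) (hd : 1 ≤ d) (m : ℝ) (hm : 0 < m)
    (A G : BCF d → BCF d)
    (hApos : ∀ v : BCF d, (∀ x, 0 ≤ v x) → ∀ x, 0 ≤ A v x)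
    (hGpos : ∀ v : BCF d, (∀ x, 0 ≤ v x) → ∀ x, 0 ≤ G v x)
    (κ : ℝ) (hκ : 0 < κ)
    (hAlip : ∀ v w : BCF d, (∀ x, 0 ≤ v x) → (∀ x, 0 ≤ w x) →
      ‖A v - A w‖ ≤ κ * ‖v - w‖)
    (κ₀ : ℝ) (hκ₀ : 0 < κ₀)
    (hGlip : ∀ r > (0 : ℝ), ∀ v w : BCF d, memTube r v → memTube r w →
      ‖G v - G w‖ ≤ Real.exp (κ₀ * r) * ‖v - w‖)
    (T : ℝ) (hT : 0 < T) (u₀ : BCF d) (hu₀ : ∀ x, 0 ≤ u₀ x) :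
    (∃ u : ℝ → BCF d, IsSolOnGen A G m T u ∧ u 0 = u₀ ∧
      ∀ t ∈ Set.Icc (0 : ℝ) T, ∀ x, 0 ≤ u t x) ∧
    ∀ u v : ℝ → BCF d,
      IsSolOnGen A G m T u → u 0 = u₀ → (∀ t ∈ Set.Icc (0 : ℝ) T, ∀ x, 0 ≤ u t x) →
      IsSolOnGen A G m T v → v 0 = u₀ → (∀ t ∈ Set.Icc (0 : ℝ) T, ∀ x, 0 ≤ v t x) →
      Set.EqOn u v (Set.Icc 0 T) :=
  statement1_general d m hm A G hApos hGpos κ hAlip κ₀ hGlip T hT u₀ hu₀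

end
end

section
/- Let (r_n)_{n∈ℕ} be a sequence of real numbers with r₁ > 0 satisfying the recurrence r_{n+1} = r_n + p e^{−q r_n} for all n ∈ ℕ, where p, q > 0. Then the series ∑_{n∈ℕ} 1/(r_n e^{q r_n}) diverges. -/
/-!
Since `g(x) = p e^{-q x}` is continuous and positive, the orbit `r_{n+1} = r_n + g(r_n)` increases
to `+∞`: a finite limit `l` would force `g(l) = 0`. On the other hand
`log r_{n+1} - log r_n ≤ (r_{n+1} - r_n) / r_n = p / (r_n e^{q r_n})`, so the partial sums of the
series dominate `(log r_n - log r_0) / p → ∞`.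
-/

open Filter Topology

theorem tendsto_atTop_of_succ_eq_add_pos {g : ℝ → ℝ} (hg : Continuous g) (hg_pos : ∀ x, 0 < g x)
    {r : ℕ → ℝ} (hr : ∀ n, r (n + 1) = r n + g (r n)) : Tendsto r atTop atTop := by
  have hmono : Monotone r :=
    monotone_nat_of_le_succ fun n => by linarith [hr n, hg_pos (r n)]
  rcases tendsto_atTop_of_monotone hmono with htop | ⟨l, hl⟩
  · exact htop
  · have hsucc : Tendsto (fun n => r (n + 1) - r n) atTop (𝓝 (l - l)) :=
      (hl.comp (tendsto_add_atTop_nat 1)).sub hl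
    have hstep : Tendsto (fun n => r (n + 1) - r n) atTop (𝓝 (g l)) :=
      ((hg.tendsto l).comp hl).congr fun n => by simp [hr n]
    linarith [tendsto_nhds_unique hsucc hstep, hg_pos l]

theorem not_summable_sub_div_self_of_tendsto_atTop {r : ℕ → ℝ} (hpos : ∀ n, 0 < r n)
    (htop : Tendsto r atTop atTop) : ¬ Summable fun n => (r (n + 1) - r n) / r n := by
  intro hsum
  have hlog_step : ∀ n, Real.log (r (n + 1)) - Real.log (r n) ≤ (r (n + 1) - r n) / r n := by
    intro n
    rw [← Real.log_div (hpos _).ne' (hpos _).ne', sub_div, div_self (hpos n).ne']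
    exact Real.log_le_sub_one_of_pos (div_pos (hpos _) (hpos _))
  have hlog_le : ∀ n, Real.log (r n) - Real.log (r 0) ≤
      ∑ i ∈ Finset.range n, (r (i + 1) - r i) / r i := fun n => by
    rw [← Finset.sum_range_sub (fun i => Real.log (r i))]
    exact Finset.sum_le_sum fun i _ => hlog_step i
  have hlog_top : Tendsto (fun n => Real.log (r n) - Real.log (r 0)) atTop atTop :=
    tendsto_atTop_add_const_right _ _ (Real.tendsto_log_atTop.comp htop)
  exact not_tendsto_nhds_of_tendsto_atTop (tendsto_atTop_mono hlog_le hlog_top) _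
    hsum.hasSum.tendsto_sum_nat

theorem statement2_general (p q : ℝ) (hp : 0 < p)
    (r : ℕ → ℝ) (hr0 : 0 < r 0)
    (hrec : ∀ n : ℕ, r (n + 1) = r n + p * Real.exp (-(q * r n))) :
    ¬ Summable (fun n : ℕ => 1 / (r n * Real.exp (q * r n))) := by
  intro hsum
  have hstep_pos : ∀ x, 0 < p * Real.exp (-(q * x)) := fun x => by positivity
  have htop : Tendsto r atTop atTop :=
    tendsto_atTop_of_succ_eq_add_pos (by fun_prop) hstep_pos hrec
  have hpos : ∀ n, 0 < r n := fun n => by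
    induction n with
    | zero => exact hr0
    | succ k ih => rw [hrec k]; positivity
  refine not_summable_sub_div_self_of_tendsto_atTop hpos htop ((hsum.mul_left p).congr fun n => ?_)
  rw [hrec n, add_sub_cancel_left, Real.exp_neg]
  field_simp

/-- Lemma `recurrence_sequence`: if `r_{n+1} = r_n + p e^{−q r_n}` with `r₀ > 0`
and `p, q > 0`, then `∑ 1/(r_n e^{q r_n})` diverges. -/
theorem statement2 (p q : ℝ) (hp : 0 < p) (hq : 0 < q)
    (r : ℕ → ℝ) (hr0 : 0 < r 0)
    (hrec : ∀ n : ℕ, r (n + 1) = r n + p * Real.exp (-(q * r n))) :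
    ¬ Summable (fun n : ℕ => 1 / (r n * Real.exp (q * r n))) :=
  statement2_general p q hp r hr0 hrec
end

section
/- Let T > 0 be fixed and let u₁, u₂ ∈ Y_T be such that for all t ∈ (0,T] and x ∈ ℝ^d: ∂_t u₁ − κ a∗u₁ + m u₁ + u₁·Gu₁ ≤ ∂_t u₂ − κ a∗u₂ + m u₂ + u₂·Gu₂, 0 ≤ u₁(x,t) ≤ θ, 0 ≤ u₂(x,t) ≤ θ, and 0 ≤ u₁(x,0) ≤ u₂(x,0) ≤ θ. Then, under assumptions (A1)–(A4), 0 ≤ u₁(x,t) ≤ u₂(x,t) ≤ θ for all t ∈ [0,T] and x ∈ ℝ^d. -/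
/-!
Let `w = u₁ − u₂` and `g(t) = ‖w(t)⁺‖`. Comparing `u₁` with `u₁ ⊓ u₂ ≤ u₂` through the
quasi-monotonicity (A4), and using that `a ∗ ·` is 1-Lipschitz and `G` is Lipschitz and
nonnegative on the tube, gives `∂ₜw ≤ K g − (m + p) w` pointwise with `K = κ + θ l + p`.
So the upper right Dini derivative of `g` is at most `(K − m − p) g`, and Grönwall's inequality
gives `g t ≤ g s · exp ((K − m − p)(t − s))` for `0 < s ≤ t`. Letting `s → 0` and using
`g 0 = 0` yields `u₁ ≤ u₂`.
-/

open MeasureTheory Filter Topology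
open scoped RealInnerProductSpace

noncomputable section

variable {d : ℕ}

open BoundedContinuousFunction Set

-- Without this shortcut, instance search for `PosPart (α →ᵇ ℝ)` wanders through the algebra
-- structure of `α →ᵇ ℝ` and times out.
instance BoundedContinuousFunction.instPosPartReal {α : Type*} [TopologicalSpace α] :
    PosPart (α →ᵇ ℝ) :=
  instPosPart

section RealValued

variable {α : Type*} [TopologicalSpace α]

lemma BoundedContinuousFunction.apply_le_norm_posPart (f : α →ᵇ ℝ) (x : α) : f x ≤ ‖f⁺‖ :=
  calc f x ≤ f⁺ x := le_posPart (f x)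
    _ ≤ ‖f⁺ x‖ := Real.le_norm_self _
    _ ≤ ‖f⁺‖ := norm_coe_le_norm _ _

lemma BoundedContinuousFunction.norm_posPart_le {f : α →ᵇ ℝ} {C : ℝ} (hC : 0 ≤ C)
    (h : ∀ x, f x ≤ C) : ‖f⁺‖ ≤ C :=
  (norm_le hC).2 fun x => by
    rw [coe_posPart, Pi.posPart_apply, Real.norm_of_nonneg (posPart_nonneg _)]
    exact sup_le (h x) hC

lemma BoundedContinuousFunction.apply_sub_apply_le_norm_sub (f g : α →ᵇ ℝ) (x : α) :
    f x - g x ≤ ‖f - g‖ := by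
  simpa [Real.dist_eq, dist_eq_norm] using
    (le_abs_self _).trans (dist_coe_le_dist (f := f) (g := g) x)

end RealValued

section Gronwall

variable {α : Type*} [TopologicalSpace α]

lemma BoundedContinuousFunction.eventually_norm_posPart_le_of_hasDerivWithinAt
    {w : ℝ → α →ᵇ ℝ} {w' : α →ᵇ ℝ} {t K c ε : ℝ} (hK : 0 ≤ K) (hε : 0 < ε)
    (hw : HasDerivWithinAt w w' (Ioi t) t) (hbound : ∀ x, w' x ≤ K * ‖(w t)⁺‖ - c * w t x) :
    ∀ᶠ z in 𝓝[>] t, ‖(w z)⁺‖ ≤ ‖(w t)⁺‖ + (z - t) * ((K - c) * ‖(w t)⁺‖ + ε) := by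
  have hslope : ∀ᶠ z in 𝓝[>] t, dist (slope w t z) w' < ε :=
    Metric.tendsto_nhds.1 ((hasDerivWithinAt_iff_tendsto_slope' (lt_irrefl t)).1 hw) ε hε
  have hsmall : ∀ᶠ z in 𝓝[>] t, (z - t) * c < 1 := by
    have : Tendsto (fun z => (z - t) * c) (𝓝[>] t) (𝓝 0) := by
      have hcont : Continuous fun z : ℝ => (z - t) * c := by fun_prop
      simpa using tendsto_nhdsWithin_of_tendsto_nhds (hcont.tendsto t)
    exact this.eventually_lt_const one_pos
  filter_upwards [hslope, hsmall, self_mem_nhdsWithin] with z hz hzc (hzt : t < z)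
  set g := ‖(w t)⁺‖
  have hg : 0 ≤ g := norm_nonneg _
  have hzt' : 0 ≤ z - t := (sub_pos.2 hzt).le
  have hcoef : 0 ≤ (1 - (z - t) * c) * g + (z - t) * (K * g + ε) := by
    have := mul_nonneg (sub_nonneg.2 hzc.le) hg
    have := mul_nonneg hzt' (by positivity : 0 ≤ K * g + ε)
    linarith
  refine norm_posPart_le (by linarith) fun x => ?_
  have hstep : w z x = w t x + (z - t) * slope w t z x := by
    have := congrArg (· x) (sub_smul_slope w t z)
    simp only [vsub_eq_sub, coe_smul, coe_sub, Pi.sub_apply, smul_eq_mul] at this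
    linarith
  have hslope_x : slope w t z x ≤ K * g - c * w t x + ε := by
    have := (dist_coe_le_dist x).trans hz.le
    rw [Real.dist_eq] at this
    linarith [hbound x, le_abs_self (slope w t z x - w' x)]
  have hwt : w t x ≤ g := apply_le_norm_posPart (w t) x
  calc w z x ≤ w t x + (z - t) * (K * g - c * w t x + ε) := by
        rw [hstep]; gcongr
    _ = (1 - (z - t) * c) * w t x + (z - t) * (K * g + ε) := by ring
    _ ≤ (1 - (z - t) * c) * g + (z - t) * (K * g + ε) := by gcongr
    _ = g + (z - t) * ((K - c) * g + ε) := by ring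

variable {w w' : ℝ → α →ᵇ ℝ} {a b K c : ℝ}

lemma BoundedContinuousFunction.norm_posPart_le_mul_exp (hK : 0 ≤ K)
    (hcont : ContinuousOn w (Icc a b))
    (hderiv : ∀ t ∈ Ioc a b, HasDerivWithinAt w (w' t) (Ioc a b) t)
    (hbound : ∀ t ∈ Ioc a b, ∀ x, w' t x ≤ K * ‖(w t)⁺‖ - c * w t x) :
    ∀ s ∈ Ioc a b, ∀ t ∈ Icc s b, ‖(w t)⁺‖ ≤ ‖(w s)⁺‖ * Real.exp ((K - c) * (t - s)) := by
  intro s hs t ht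
  have hg : ContinuousOn (fun t => ‖(w t)⁺‖) (Icc s b) :=
    (continuous_norm.comp continuous_posPart).comp_continuousOn
      (hcont.mono (Icc_subset_Icc_left hs.1.le))
  have hdini : ∀ τ ∈ Ico s b, ∀ r, (K - c) * ‖(w τ)⁺‖ < r →
      ∃ᶠ z in 𝓝[>] τ, (z - τ)⁻¹ * (‖(w z)⁺‖ - ‖(w τ)⁺‖) < r := by
    intro τ hτ r hr
    have haτ : a < τ := hs.1.trans_le hτ.1
    have hmem : Ioc a b ∈ 𝓝[>] τ := mem_of_superset (Ioo_mem_nhdsGT hτ.2)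
      (Ioo_subset_Ioc_self.trans (Ioc_subset_Ioc_left haτ.le))
    have hw := (hderiv τ ⟨haτ, hτ.2.le⟩).mono_of_mem_nhdsWithin hmem
    have hε : 0 < (r - (K - c) * ‖(w τ)⁺‖) / 2 := by linarith
    refine Eventually.frequently ?_
    filter_upwards [eventually_norm_posPart_le_of_hasDerivWithinAt hK hε hw
      (hbound τ ⟨haτ, hτ.2.le⟩), self_mem_nhdsWithin] with z hz (hτz : τ < z)
    rw [inv_mul_lt_iff₀ (sub_pos.2 hτz)]
    nlinarith
  have := le_gronwallBound_of_liminf_deriv_right_le (K := K - c) (ε := 0) hg hdini le_rfl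
    (fun τ _ => (add_zero _).ge) t ht
  rwa [gronwallBound_ε0] at this

theorem BoundedContinuousFunction.nonpos_of_hasDerivWithinAt_le (hK : 0 ≤ K)
    (hcont : ContinuousOn w (Icc a b))
    (hderiv : ∀ t ∈ Ioc a b, HasDerivWithinAt w (w' t) (Ioc a b) t)
    (hbound : ∀ t ∈ Ioc a b, ∀ x, w' t x ≤ K * ‖(w t)⁺‖ - c * w t x) (ha : w a ≤ 0) :
    ∀ t ∈ Icc a b, w t ≤ 0 := by
  intro t ht
  rcases ht.1.eq_or_lt with rfl | hat
  · exact ha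
  rw [← posPart_eq_zero, ← norm_le_zero_iff]
  have hlim : Tendsto (fun s => ‖(w s)⁺‖ * Real.exp ((K - c) * (t - s))) (𝓝[>] a)
      (𝓝 (‖(w a)⁺‖ * Real.exp ((K - c) * (t - a)))) := by
    have hwa : ContinuousWithinAt w (Ioi a) a :=
      (hcont a ⟨le_rfl, hat.le.trans ht.2⟩).mono_of_mem_nhdsWithin
        (Icc_mem_nhdsGT (hat.trans_le ht.2))
    refine ((continuous_norm.comp continuous_posPart).continuousAt.comp_continuousWithinAt
      hwa).mul ?_
    exact Continuous.continuousWithinAt (by fun_prop)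
  rw [posPart_eq_zero.2 ha, norm_zero, zero_mul] at hlim
  refine ge_of_tendsto hlim ?_
  filter_upwards [Ioc_mem_nhdsGT hat] with s hs
  exact norm_posPart_le_mul_exp hK hcont hderiv hbound s ⟨hs.1, hs.2.trans ht.2⟩ t ⟨hs.2, ht.2⟩

end Gronwall

section Comparison

variable {a : EucSp d → ℝ}

lemma integrable_convol_integrand (haI : Integrable a) (v : BCF d) (x : EucSp d) :
    Integrable (fun y => a (x - y) * v y) :=
  ((integrable_comp_sub_left a x).2 haI).mul_bdd v.continuous.aestronglyMeasurable
    (Eventually.of_forall v.norm_coe_le_norm)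

lemma convol_sub (haI : Integrable a) (v w : BCF d) (x : EucSp d) :
    convol a ⇑(v - w) x = convol a v x - convol a w x := by
  rw [convol, convol, convol, ← integral_sub (integrable_convol_integrand haI v x)
    (integrable_convol_integrand haI w x)]
  simp only [coe_sub, Pi.sub_apply, mul_sub]

lemma convol_le_norm (ha0 : ∀ x, 0 ≤ a x) (haI : Integrable a) (haN : ∫ x, a x = 1)
    (v : BCF d) (x : EucSp d) : convol a v x ≤ ‖v‖ :=
  calc convol a v x ≤ ∫ y, a (x - y) * ‖v‖ :=
        integral_mono (integrable_convol_integrand haI v x)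
          (((integrable_comp_sub_left a x).2 haI).mul_const _) fun y =>
          mul_le_mul_of_nonneg_left ((Real.le_norm_self _).trans (v.norm_coe_le_norm y)) (ha0 _)
    _ = ‖v‖ := by rw [integral_mul_const, integral_sub_left_eq_self, haN, one_mul]

lemma memTube_inf {θ : ℝ} {v w : BCF d} (hv : memTube θ v) (hw : memTube θ w) :
    memTube θ (v ⊓ w) :=
  fun x => ⟨le_inf (hv x).1 (hw x).1, inf_le_left.trans (hv x).2⟩

def shiftedRhs (a : EucSp d → ℝ) (κ p : ℝ) (G : BCF d → BCF d) (v : BCF d) (x : EucSp d) : ℝ :=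
  κ * convol a v x - v x * G v x + p * v x

variable {κ m p θ l : ℝ} {G : BCF d → BCF d}

lemma shiftedRhs_sub_le (ha0 : ∀ x, 0 ≤ a x) (haI : Integrable a) (haN : ∫ x, a x = 1)
    (hκ : 0 ≤ κ) (hp : 0 ≤ p) (hl : 0 ≤ l) {v z : BCF d} (hz : memTube θ z) (hzv : z ≤ v)
    (hGv : ∀ x, 0 ≤ G v x) (hLip : ‖G v - G z‖ ≤ l * ‖v - z‖) (x : EucSp d) :
    shiftedRhs a κ p G v x - shiftedRhs a κ p G z x ≤ (κ + θ * l + p) * ‖v - z‖ := by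
  have hconv : convol a v x - convol a z x ≤ ‖v - z‖ := by
    rw [← convol_sub haI]; exact convol_le_norm ha0 haI haN _ x
  have hvz := apply_sub_apply_le_norm_sub v z x
  have hG : G z x - G v x ≤ l * ‖v - z‖ :=
    (apply_sub_apply_le_norm_sub _ _ x).trans (by rwa [norm_sub_rev])
  have hreact : z x * G z x - v x * G v x ≤ θ * (l * ‖v - z‖) :=
    calc z x * G z x - v x * G v x = z x * (G z x - G v x) - (v x - z x) * G v x := by ring
      _ ≤ z x * (l * ‖v - z‖) := by
          have hzvx : z x ≤ v x := hzv x
          linarith [mul_le_mul_of_nonneg_left hG (hz x).1,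
            mul_nonneg (sub_nonneg.2 hzvx) (hGv x)]
      _ ≤ θ * (l * ‖v - z‖) := mul_le_mul_of_nonneg_right (hz x).2 (by positivity)
  unfold shiftedRhs
  linarith [mul_le_mul_of_nonneg_left hconv hκ, mul_le_mul_of_nonneg_left hvz hp]

lemma deriv_sub_deriv_le (ha0 : ∀ x, 0 ≤ a x) (haI : Integrable a) (haN : ∫ x, a x = 1)
    (hκ : 0 ≤ κ) (hp : 0 ≤ p) (hl : 0 ≤ l) (hG : ∀ v, memTube θ v → ∀ x, 0 ≤ G v x)
    (hLip : ∀ v w, memTube θ v → memTube θ w → ‖G v - G w‖ ≤ l * ‖v - w‖)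
    (hmono : ∀ v w, memTube θ v → memTube θ w → (∀ x, v x ≤ w x) →
      ∀ x, shiftedRhs a κ p G v x ≤ shiftedRhs a κ p G w x)
    {v₁ v₂ v₁' v₂' : BCF d} (hv₁ : memTube θ v₁) (hv₂ : memTube θ v₂)
    (hineq : ∀ x, v₁' x - κ * convol a v₁ x + m * v₁ x + v₁ x * G v₁ x ≤
      v₂' x - κ * convol a v₂ x + m * v₂ x + v₂ x * G v₂ x) (x : EucSp d) :
    (v₁' - v₂') x ≤ (κ + θ * l + p) * ‖(v₁ - v₂)⁺‖ - (m + p) * (v₁ - v₂) x := by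
  have hz := memTube_inf hv₁ hv₂
  have hmono_z := hmono _ _ hz hv₂ (fun y => inf_le_right) x
  have hlip_z := shiftedRhs_sub_le ha0 haI haN hκ hp hl hz inf_le_left (hG v₁ hv₁)
    (hLip _ _ hv₁ hz) x
  have hdist : v₁ - v₁ ⊓ v₂ = (v₁ - v₂)⁺ := by rw [inf_eq_sub_posPart_sub, sub_sub_cancel]
  rw [hdist] at hlip_z
  simp only [shiftedRhs, coe_sub, Pi.sub_apply] at hmono_z hlip_z ⊢
  linarith [hineq x]

end Comparison

theorem statement5_general (d : ℕ) (κ m : ℝ) (hκ : 0 < κ)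
    (a : EucSp d → ℝ) (ha0 : ∀ x, 0 ≤ a x) (haI : Integrable a)
    (haN : (∫ x, a x) = 1)
    (G : BCF d → BCF d) (θ : ℝ)
    (hA2 : assumA2 G κ m θ) (hA3 : assumA3 G θ)
    (hA4 : assumA4 a κ G θ)
    (T : ℝ)
    (u₁ u₂ u₁' u₂' : ℝ → BCF d) (hY1 : MemY T u₁ u₁') (hY2 : MemY T u₂ u₂')
    (hb1 : ∀ t ∈ Set.Ioc (0 : ℝ) T, ∀ x, 0 ≤ u₁ t x ∧ u₁ t x ≤ θ)
    (hb2 : ∀ t ∈ Set.Ioc (0 : ℝ) T, ∀ x, 0 ≤ u₂ t x ∧ u₂ t x ≤ θ)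
    (hineq : ∀ t ∈ Set.Ioc (0 : ℝ) T, ∀ x,
      u₁' t x - κ * convol a (⇑(u₁ t)) x + m * u₁ t x + u₁ t x * G (u₁ t) x ≤
        u₂' t x - κ * convol a (⇑(u₂ t)) x + m * u₂ t x + u₂ t x * G (u₂ t) x)
    (hinit : ∀ x, 0 ≤ u₁ 0 x ∧ u₁ 0 x ≤ u₂ 0 x ∧ u₂ 0 x ≤ θ) :
    ∀ t ∈ Set.Icc (0 : ℝ) T, ∀ x,
      0 ≤ u₁ t x ∧ u₁ t x ≤ u₂ t x ∧ u₂ t x ≤ θ := by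
  obtain ⟨hθ, -, -, hG⟩ := hA2
  obtain ⟨l, hl, hLip⟩ := hA3
  obtain ⟨p, hp, hmono⟩ := hA4
  have htube : ∀ t ∈ Icc 0 T, memTube θ (u₁ t) ∧ memTube θ (u₂ t) := by
    intro t ht
    rcases ht.1.eq_or_lt with rfl | ht₀
    · exact ⟨fun x => ⟨(hinit x).1, (hinit x).2.1.trans (hinit x).2.2⟩,
        fun x => ⟨(hinit x).1.trans (hinit x).2.1, (hinit x).2.2⟩⟩
    · exact ⟨hb1 t ⟨ht₀, ht.2⟩, hb2 t ⟨ht₀, ht.2⟩⟩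
  have hle := nonpos_of_hasDerivWithinAt_le (w := fun t => u₁ t - u₂ t)
    (w' := fun t => u₁' t - u₂' t) (K := κ + θ * l + p) (c := m + p) (by positivity)
    (hY1.1.sub hY2.1) (fun t ht => (hY1.2.2 t ht).sub (hY2.2.2 t ht))
    (fun t ht => deriv_sub_deriv_le ha0 haI haN hκ.le hp hl.le (fun v hv x => (hG v hv x).1)
      hLip hmono (htube t (Ioc_subset_Icc_self ht)).1 (htube t (Ioc_subset_Icc_self ht)).2
      (hineq t ht))
    (fun x => sub_nonpos.2 (hinit x).2.1)
  intro t ht x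
  exact ⟨((htube t ht).1 x).1, sub_nonpos.1 (hle t ht x), ((htube t ht).2 x).2⟩

/-- Comparison principle for the basic equation (Theorem `compar_pr_basic`, part 1). -/
theorem statement5 (d : ℕ) (hd : 1 ≤ d) (κ m : ℝ) (hκ : 0 < κ)
    (a : EucSp d → ℝ) (ha0 : ∀ x, 0 ≤ a x) (haI : Integrable a)
    (haN : (∫ x, a x) = 1)
    (G : BCF d → BCF d) (θ : ℝ)
    (hA1 : assumA1 κ m) (hA2 : assumA2 G κ m θ) (hA3 : assumA3 G θ)
    (hA4 : assumA4 a κ G θ)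
    (T : ℝ) (hT : 0 < T)
    (u₁ u₂ u₁' u₂' : ℝ → BCF d) (hY1 : MemY T u₁ u₁') (hY2 : MemY T u₂ u₂')
    (hb1 : ∀ t ∈ Set.Ioc (0 : ℝ) T, ∀ x, 0 ≤ u₁ t x ∧ u₁ t x ≤ θ)
    (hb2 : ∀ t ∈ Set.Ioc (0 : ℝ) T, ∀ x, 0 ≤ u₂ t x ∧ u₂ t x ≤ θ)
    (hineq : ∀ t ∈ Set.Ioc (0 : ℝ) T, ∀ x,
      u₁' t x - κ * convol a (⇑(u₁ t)) x + m * u₁ t x + u₁ t x * G (u₁ t) x ≤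
        u₂' t x - κ * convol a (⇑(u₂ t)) x + m * u₂ t x + u₂ t x * G (u₂ t) x)
    (hinit : ∀ x, 0 ≤ u₁ 0 x ∧ u₁ 0 x ≤ u₂ 0 x ∧ u₂ 0 x ≤ θ) :
    ∀ t ∈ Set.Icc (0 : ℝ) T, ∀ x,
      0 ≤ u₁ t x ∧ u₁ t x ≤ u₂ t x ∧ u₂ t x ≤ θ :=
  statement5_general d κ m hκ a ha0 haI haN G θ hA2 hA3 hA4 T u₁ u₂ u₁' u₂' hY1 hY2 hb1 hb2 hineq
    hinit
end
end

section
/- Let b ∈ L¹(ℝ → ℝ₊) with ∫_ℝ b(s) ds = 1 and ∫_ℝ |s| b(s) ds < ∞, and let v ∈ L^∞(ℝ → ℝ₊) be a non-increasing function. Then lim_{r→∞} ∫_{−r}^{r} ((b∗v)(s) − v(s)) ds = (v(−∞) − v(+∞)) · ∫_ℝ s b(s) ds, where v(±∞) denote the limits of v at ±∞ (which exist by monotonicity and boundedness) and (b∗v)(s) = ∫_ℝ b(s − y) v(y) dy. -/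
/-!
Since `∫ b = 1`, `(b∗v)(s) - v(s) = ∫ b(u) (v(s - u) - v(s)) du`. After Fubini, the integral of
`v(s - u) - v(s)` over `[-r, r]` telescopes to the difference of the integrals of `v` over the
windows `[-r - u, -r]` and `[r - u, r]`. These tend to `u v(-∞)` and `u v(+∞)` and are bounded
by `C |u|`, where `C` bounds `|v|`, so the finite first moment of `b` lets dominated convergence
conclude.
-/

open Filter Topology MeasureTheory Set

theorem tendsto_intervalIntegral_window_atTop {w : ℝ → ℝ} {L : ℝ} (hw : AEStronglyMeasurable w)
    (hL : Tendsto w atTop (𝓝 L)) (u : ℝ) :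
    Tendsto (fun r => ∫ s in (r - u)..r, w s) atTop (𝓝 (u * L)) := by
  obtain ⟨R, hR⟩ := eventually_atTop.1 (hL.norm.eventually (gt_mem_nhds (lt_add_one ‖L‖)))
  have hshift (r : ℝ) : ∫ s in (r - u)..r, w s = ∫ t in (-u)..0, w (t + r) := by
    rw [intervalIntegral.integral_comp_add_right, neg_add_eq_sub, zero_add]
  have hconst : u * L = ∫ _ in (-u)..0, L := by simp
  simp only [hshift, hconst]
  refine intervalIntegral.tendsto_integral_filter_of_dominated_convergence (fun _ => ‖L‖ + 1)
    (.of_forall fun r => ?_) ?_ intervalIntegrable_const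
    (ae_of_all _ fun t _ => hL.comp (tendsto_atTop_add_const_left _ t tendsto_id))
  · exact (hw.comp_measurePreserving (measurePreserving_add_right volume r)).restrict
  · filter_upwards [eventually_ge_atTop (R + |u|)] with r hr
    refine ae_of_all _ fun t ht => (hR _ ?_).le
    rcases mem_uIoc.1 ht with ⟨ht, -⟩ | ⟨ht, -⟩ <;> linarith [neg_abs_le u, le_abs_self u]

theorem tendsto_intervalIntegral_window_atBot {w : ℝ → ℝ} {L : ℝ} (hw : AEStronglyMeasurable w)
    (hL : Tendsto w atBot (𝓝 L)) (u : ℝ) :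
    Tendsto (fun r => ∫ s in (-r - u)..(-r), w s) atTop (𝓝 (u * L)) := by
  have h := tendsto_intervalIntegral_window_atTop
    (hw.comp_measurePreserving (Measure.measurePreserving_neg volume))
    (hL.comp tendsto_neg_atTop_atBot) (-u)
  convert h.neg using 1
  · funext r
    rw [Function.comp_def, intervalIntegral.integral_comp_neg, intervalIntegral.integral_symm]
    congr 2
    ring
  · rw [neg_mul, neg_neg]

theorem intervalIntegrable_of_abs_le {v : ℝ → ℝ} {C : ℝ} (hv : AEStronglyMeasurable v)
    (hC : ∀ s, |v s| ≤ C) (a c : ℝ) : IntervalIntegrable v volume a c :=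
  intervalIntegrable_const.mono_fun' hv.restrict (ae_of_all _ hC)

theorem continuous_intervalIntegral_window {v : ℝ → ℝ}
    (hv : ∀ a c, IntervalIntegrable v volume a c) (r : ℝ) :
    Continuous fun u => ∫ s in (r - u)..r, v s := by
  simp_rw [intervalIntegral.integral_symm r]
  exact ((intervalIntegral.continuous_primitive hv r).comp (continuous_const.sub continuous_id)).neg

theorem intervalIntegral_comp_sub_right_sub {v : ℝ → ℝ}
    (hv : ∀ a c, IntervalIntegrable v volume a c) (a c u : ℝ) :
    ∫ s in a..c, (v (s - u) - v s) = (∫ s in (a - u)..a, v s) - ∫ s in (c - u)..c, v s := by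
  have hvu := (hv (a - u) (c - u)).comp_sub_right u
  rw [sub_add_cancel, sub_add_cancel] at hvu
  rw [intervalIntegral.integral_sub hvu (hv a c),
    intervalIntegral.integral_comp_sub_right,
    intervalIntegral.integral_interval_sub_interval_comm (hv _ _) (hv _ _) (hv _ _)]

theorem integral_mul_comp_sub_sub_eq {b v : ℝ → ℝ} {C : ℝ} (hb : Integrable b)
    (hv : AEStronglyMeasurable v) (hC : ∀ s, |v s| ≤ C) (s : ℝ) :
    ∫ u, b u * (v (s - u) - v s) = (∫ y, b (s - y) * v y) - (∫ u, b u) * v s := by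
  have hbv : Integrable fun u => b u * v (s - u) :=
    hb.mul_bdd (hv.comp_measurePreserving (Measure.measurePreserving_sub_left volume s))
      (ae_of_all _ fun u => hC (s - u))
  have hswap : ∫ y, b (s - y) * v y = ∫ u, b u * v (s - u) := by
    simpa only [sub_sub_cancel] using integral_sub_left_eq_self (fun u => b u * v (s - u)) volume s
  simp_rw [mul_sub]
  rw [integral_sub hbv (hb.mul_const _), integral_mul_const, hswap]

theorem integral_integral_mul_swap {α β : Type*} [MeasurableSpace α] [MeasurableSpace β]
    {μ : Measure α} {ν : Measure β} [SFinite μ] [IsFiniteMeasure ν] {b : α → ℝ} {f : α → β → ℝ}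
    {C : ℝ} (hb : Integrable b μ) (hf : AEStronglyMeasurable (Function.uncurry f) (μ.prod ν))
    (hC : ∀ u s, |f u s| ≤ C) :
    ∫ s, ∫ u, b u * f u s ∂μ ∂ν = ∫ u, b u * ∫ s, f u s ∂ν ∂μ := by
  have hint : Integrable (Function.uncurry fun u s => b u * f u s) (μ.prod ν) :=
    (hb.norm.mul_prod (integrable_const C)).mono' (hb.aestronglyMeasurable.comp_fst.mul hf) <|
      ae_of_all _ fun z => by
        simpa only [Function.uncurry, norm_mul, Real.norm_eq_abs] using
          mul_le_mul_of_nonneg_left (hC z.1 z.2) (norm_nonneg (b z.1))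
  rw [← integral_integral_swap hint]
  simp_rw [integral_const_mul]

theorem tendsto_integral_mul_window_sub {b v : ℝ → ℝ} {C vneg vpos : ℝ}
    (hb : AEStronglyMeasurable b) (hbm : Integrable fun u => |u| * b u)
    (hv : AEStronglyMeasurable v) (hC : ∀ s, |v s| ≤ C)
    (hneg : Tendsto v atBot (𝓝 vneg)) (hpos : Tendsto v atTop (𝓝 vpos)) :
    Tendsto (fun r => ∫ u, b u * ((∫ s in (-r - u)..(-r), v s) - ∫ s in (r - u)..r, v s))
      atTop (𝓝 ((vneg - vpos) * ∫ u, u * b u)) := by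
  have hvi := intervalIntegrable_of_abs_le hv hC
  have hwindow (r u : ℝ) : |∫ s in (r - u)..r, v s| ≤ C * |u| := by
    simpa using intervalIntegral.norm_integral_le_of_norm_le_const (a := r - u) (b := r) (f := v)
      fun x _ => hC x
  have hlim : (vneg - vpos) * ∫ u, u * b u = ∫ u, b u * (u * vneg - u * vpos) := by
    rw [← integral_const_mul]
    congr 1 with u
    ring
  rw [hlim]
  refine tendsto_integral_filter_of_dominated_convergence (fun u => 2 * C * ‖|u| * b u‖)
    (.of_forall fun r => ?_) (.of_forall fun r => ae_of_all _ fun u => ?_)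
    (hbm.norm.const_mul _) (ae_of_all _ fun u => ?_)
  · exact hb.mul ((continuous_intervalIntegral_window hvi (-r)).sub
      (continuous_intervalIntegral_window hvi r)).aestronglyMeasurable
  · calc ‖b u * ((∫ s in (-r - u)..(-r), v s) - ∫ s in (r - u)..r, v s)‖
        = |b u| * |(∫ s in (-r - u)..(-r), v s) - ∫ s in (r - u)..r, v s| := by
          rw [Real.norm_eq_abs, abs_mul]
      _ ≤ |b u| * (C * |u| + C * |u|) := by
          gcongr
          exact (abs_sub _ _).trans (add_le_add (hwindow _ _) (hwindow _ _))
      _ = 2 * C * ‖|u| * b u‖ := by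
          rw [Real.norm_eq_abs, abs_mul, abs_abs]
          ring
  · exact ((tendsto_intervalIntegral_window_atBot hv hneg u).sub
      (tendsto_intervalIntegral_window_atTop hv hpos u)).const_mul (b u)

theorem statement12_general (b : ℝ → ℝ) (hbI : Integrable b)
    (hb1 : (∫ s, b s) = 1) (hbm : Integrable fun s => |s| * b s)
    (v : ℝ → ℝ)
    (hmono : Antitone v)
    (vneg vpos : ℝ)
    (hneg : Tendsto v atBot (nhds vneg)) (hpos : Tendsto v atTop (nhds vpos)) :
    Tendsto (fun r : ℝ => ∫ s in (-r)..r, ((∫ y, b (s - y) * v y) - v s))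
      atTop (nhds ((vneg - vpos) * ∫ s, s * b s)) := by
  obtain ⟨C, hvC⟩ : ∃ C, ∀ s, |v s| ≤ C := ⟨max |vpos| |vneg|, fun s =>
    abs_le_max_abs_abs (hmono.le_of_tendsto hpos s) (hmono.ge_of_tendsto hneg s)⟩
  have hvm : Measurable v := hmono.measurable
  have hvi := intervalIntegrable_of_abs_le hvm.aestronglyMeasurable hvC
  refine (tendsto_integral_mul_window_sub hbI.aestronglyMeasurable hbm hvm.aestronglyMeasurable
    hvC hneg hpos).congr' ?_
  filter_upwards [eventually_ge_atTop 0] with r hr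
  have hdiff_meas : AEStronglyMeasurable (Function.uncurry fun u s => v (s - u) - v s)
      (volume.prod (volume.restrict (Ioc (-r) r))) :=
    ((hvm.comp (measurable_snd.sub measurable_fst)).sub
      (hvm.comp measurable_snd)).aestronglyMeasurable
  have hdiff_le (u s : ℝ) : |v (s - u) - v s| ≤ C + C :=
    (abs_sub _ _).trans (add_le_add (hvC _) (hvC _))
  calc ∫ u, b u * ((∫ s in (-r - u)..(-r), v s) - ∫ s in (r - u)..r, v s)
      = ∫ u, b u * ∫ s in (-r)..r, (v (s - u) - v s) := by
        simp_rw [intervalIntegral_comp_sub_right_sub hvi]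
    _ = ∫ s in (-r)..r, ∫ u, b u * (v (s - u) - v s) := by
        rw [intervalIntegral.integral_of_le (neg_le_self hr)]
        simp_rw [intervalIntegral.integral_of_le (neg_le_self hr)]
        exact (integral_integral_mul_swap hbI hdiff_meas hdiff_le).symm
    _ = ∫ s in (-r)..r, ((∫ y, b (s - y) * v y) - v s) := by
        simp_rw [integral_mul_comp_sub_sub_eq hbI hvm.aestronglyMeasurable hvC, hb1, one_mul]

/-- Lemma `average_of_jump_gen_is_zero`: the integral of `b∗v − v` over `[−r, r]`
converges, as `r → ∞`, to `(v(−∞) − v(+∞)) ∫ s b(s) ds`. -/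
theorem statement12 (b : ℝ → ℝ) (hb0 : ∀ s, 0 ≤ b s) (hbI : Integrable b)
    (hb1 : (∫ s, b s) = 1) (hbm : Integrable fun s => |s| * b s)
    (v : ℝ → ℝ) (hv0 : ∀ s, 0 ≤ v s) (hvb : ∃ C, ∀ s, v s ≤ C)
    (hmono : Antitone v)
    (vneg vpos : ℝ)
    (hneg : Tendsto v atBot (nhds vneg)) (hpos : Tendsto v atTop (nhds vpos)) :
    Tendsto (fun r : ℝ => ∫ s in (-r)..r, ((∫ y, b (s - y) * v y) - v s))
      atTop (nhds ((vneg - vpos) * ∫ s, s * b s)) :=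
  statement12_general b hbI hb1 hbm v hmono vneg vpos hneg hpos
end

section
/- Assume (A1), (A5) and (A9), and let 𝔪 := κ ∫ x a(x) dx ∈ ℝ^d. Then there exists α₀ > 0 such that for every α ∈ (0, α₀) there exists T = T(α) > 0 such that for every q > 0 the function w(x,t) = q·exp(−|x − t𝔪|²/(α t)) satisfies ∂w/∂t(x,t) − κ(a∗w)(x,t) + m w(x,t) ≤ 0 for all x ∈ ℝ^d and all t > T (i.e. w is a subsolution of the linear equation ∂v/∂t = κ a∗v − mv for t > T). -/
open MeasureTheory Filter Topology
open scoped RealInnerProductSpace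

noncomputable section

variable {d : ℕ}

/-!
With `ξ = x - t𝔪` and `η = ξ / (αt)`, both `∂ₜw` and `a ∗ w` factor through `w(x,t)`, and the
claim becomes `α|η|² + 2⟪η, 𝔪⟫ + m ≤ κ ∫ a(z) exp(2⟪η, z⟫ - |z|²/(αt)) dz`, where
`⟪η, 𝔪⟫ = κ ∫ a(z) ⟪η, z⟫ dz`. For bounded `η`, `exp y ≥ 1 + y` linearises the right-hand side to
`κ + 2⟪η, 𝔪⟫` up to errors that are small once the tail of `a(z)(1 + |z|)` beyond some radius `R`
is small and `αt ≫ R²`; the slack `κ - m > 0` absorbs them together with `α|η|²` for small `α`.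
For large `η`, the ball of radius `ρ/4` centred at distance `3ρ/4` from `0` in the direction of `η`,
on which `a ≥ ρ` by (A5), bounds the right-hand side below by a multiple of `exp(ρ|η|/2)`, which
outgrows the quadratic left-hand side.
-/

section NormTail

variable {E F : Type*} [NormedAddCommGroup E] [MeasurableSpace E] [NormedAddCommGroup F]
  [NormedSpace ℝ F] {μ : Measure E}

lemma tendsto_setIntegral_lt_norm_atTop [OpensMeasurableSpace E] {f : E → F}
    (hf : Integrable f μ) :
    Tendsto (fun R : ℝ => ∫ z in {z : E | R < ‖z‖}, f z ∂μ) atTop (𝓝 0) := by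
  have h := tendsto_setIntegral_of_antitone (μ := μ) (f := f)
    (fun R : ℝ => measurableSet_lt measurable_const measurable_norm)
    (fun R R' hRR' z hz => lt_of_le_of_lt hRR' hz) ⟨0, hf.integrableOn⟩
  have hempty : ⋂ R : ℝ, {z : E | R < ‖z‖} = ∅ :=
    Set.eq_empty_of_forall_notMem fun z hz => lt_irrefl ‖z‖ (Set.mem_iInter.1 hz ‖z‖)
  rwa [hempty, Measure.restrict_empty, integral_zero_measure] at h

lemma MeasureTheory.Integrable.mul_one_add_mul_norm {a : E → ℝ} (ha : Integrable a μ)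
    (hM : Integrable (fun z => ‖z‖ * a z) μ) (c : ℝ) :
    Integrable (fun z => a z * (1 + c * ‖z‖)) μ :=
  (ha.add (hM.const_mul c)).congr (ae_of_all _ fun z => by simp only [Pi.add_apply]; ring)

end NormTail

lemma eventually_sq_add_mul_add_le_mul_exp {b k : ℝ} (hb : 0 < b) (hk : 0 < k) (p q : ℝ) :
    ∀ᶠ P in atTop, P ^ 2 + p * P + q ≤ k * Real.exp (b * P) := by
  have h : (fun P : ℝ => P ^ 2 + p * P + q) =o[atTop] fun P => Real.exp (b * P) := by
    refine ((isLittleO_pow_exp_pos_mul_atTop 2 hb).add ?_).add ?_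
    · simpa using (isLittleO_pow_exp_pos_mul_atTop 1 hb).const_mul_left p
    · simpa using (isLittleO_pow_exp_pos_mul_atTop 0 hb).const_mul_left q
  filter_upwards [h.def hk] with P hP
  rw [Real.norm_of_nonneg (Real.exp_pos _).le] at hP
  exact (le_abs_self _).trans hP

section GaussianTilt

variable {E : Type*} [NormedAddCommGroup E] [InnerProductSpace ℝ E]

lemma two_inner_sub_norm_sq_div_le {s : ℝ} (hs : 0 < s) (η z : E) :
    2 * ⟪η, z⟫ - ‖z‖ ^ 2 / s ≤ s * ‖η‖ ^ 2 := by
  have h := norm_sub_sq_real (s • η) z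
  rw [norm_smul, real_inner_smul_left, Real.norm_of_nonneg hs.le] at h
  rw [sub_le_iff_le_add, ← sub_le_iff_le_add', le_div_iff₀ hs]
  nlinarith [sq_nonneg ‖s • η - z‖]

lemma hasDerivAt_exp_neg_norm_sub_smul_sq_div {α t : ℝ} (hα : α ≠ 0) (ht : t ≠ 0) (x v : E) :
    HasDerivAt (fun s : ℝ => Real.exp (-‖x - s • v‖ ^ 2 / (α * s)))
      (Real.exp (-‖x - t • v‖ ^ 2 / (α * t)) *
        (α * ‖(α * t)⁻¹ • (x - t • v)‖ ^ 2 + 2 * ⟪(α * t)⁻¹ • (x - t • v), v⟫)) t := by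
  have hN : HasDerivAt (fun s : ℝ => ‖x - s • v‖ ^ 2) (2 * ⟪x - t • v, -((1 : ℝ) • v)⟫) t :=
    (((hasDerivAt_id t).smul_const v).const_sub x).norm_sq
  have hD : HasDerivAt (fun s : ℝ => α * s) (α * 1) t := (hasDerivAt_id t).const_mul α
  refine (hN.neg.div hD (mul_ne_zero hα ht)).exp.congr_deriv ?_
  simp only [Pi.div_apply, Pi.neg_apply, norm_smul, real_inner_smul_left, Real.norm_eq_abs,
    mul_pow, sq_abs, one_smul, inner_neg_right]
  field_simp
  ring

variable [MeasurableSpace E] [BorelSpace E] {μ : Measure E}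

lemma integral_comp_sub_mul_exp_neg_norm_sub_sq_div [μ.IsAddLeftInvariant] [μ.IsNegInvariant]
    (a : E → ℝ) {s : ℝ} (hs : s ≠ 0) (x c : E) :
    ∫ y, a (x - y) * Real.exp (-‖y - c‖ ^ 2 / s) ∂μ =
      Real.exp (-‖x - c‖ ^ 2 / s) *
        ∫ z, a z * Real.exp (2 * ⟪s⁻¹ • (x - c), z⟫ - ‖z‖ ^ 2 / s) ∂μ := by
  rw [← integral_sub_left_eq_self _ μ x, ← integral_const_mul]
  congr 1
  ext z
  rw [sub_sub_cancel, sub_right_comm, norm_sub_sq_real, real_inner_smul_left, mul_left_comm,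
    ← Real.exp_add]
  congr 2
  field_simp
  ring

lemma MeasureTheory.Integrable.mul_exp_two_inner_sub {a : E → ℝ} (ha : Integrable a μ) {s : ℝ}
    (hs : 0 < s) (η : E) : Integrable (fun z => a z * Real.exp (2 * ⟪η, z⟫ - ‖z‖ ^ 2 / s)) μ := by
  refine ha.mul_bdd (c := Real.exp (s * ‖η‖ ^ 2)) ?_ (ae_of_all _ fun z => ?_)
  · exact (by fun_prop : Continuous fun z : E =>
      Real.exp (2 * ⟪η, z⟫ - ‖z‖ ^ 2 / s)).aestronglyMeasurable
  · rw [Real.norm_of_nonneg (Real.exp_pos _).le]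
    exact Real.exp_le_exp.2 (two_inner_sub_norm_sq_div_le hs η z)

end GaussianTilt

section Kernel

variable {E : Type*} [NormedAddCommGroup E] [InnerProductSpace ℝ E]

lemma one_add_two_inner_sub_indicator_le_exp {s R c : ℝ} (hs : 0 < s) {η : E} (hη : ‖η‖ ≤ c)
    (z : E) :
    1 + 2 * ⟪η, z⟫ - R ^ 2 / s - {z : E | R < ‖z‖}.indicator (fun z => 1 + 2 * c * ‖z‖) z
      ≤ Real.exp (2 * ⟪η, z⟫ - ‖z‖ ^ 2 / s) := by
  by_cases hz : R < ‖z‖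
  · rw [Set.indicator_of_mem (show z ∈ {z : E | R < ‖z‖} from hz)]
    have hinner : ⟪η, z⟫ ≤ c * ‖z‖ :=
      (real_inner_le_norm η z).trans (mul_le_mul_of_nonneg_right hη (norm_nonneg z))
    have hR : 0 ≤ R ^ 2 / s := by positivity
    linarith [Real.exp_pos (2 * ⟪η, z⟫ - ‖z‖ ^ 2 / s)]
  · rw [Set.indicator_of_notMem (show z ∉ {z : E | R < ‖z‖} from hz)]
    have hzR : ‖z‖ ^ 2 / s ≤ R ^ 2 / s :=
      div_le_div_of_nonneg_right (pow_le_pow_left₀ (norm_nonneg z) (not_lt.1 hz) 2) hs.le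
    linarith [Real.add_one_le_exp (2 * ⟪η, z⟫ - ‖z‖ ^ 2 / s)]

lemma norm_lt_and_half_le_inner_of_mem_ball {e z : E} (he : ‖e‖ = 1) {r : ℝ}
    (hz : z ∈ Metric.ball ((3 * r / 4) • e) (r / 4)) : ‖z‖ < r ∧ r / 2 ≤ ⟪e, z⟫ := by
  rw [Metric.mem_ball, dist_eq_norm] at hz
  have hr : 0 < r := by linarith [norm_nonneg (z - (3 * r / 4) • e)]
  have hcenter : ‖(3 * r / 4) • e‖ = 3 * r / 4 := by
    rw [norm_smul, he, mul_one, Real.norm_of_nonneg (by positivity)]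
  have hdecomp : z = (3 * r / 4) • e + (z - (3 * r / 4) • e) := by abel
  constructor
  · calc ‖z‖ ≤ ‖(3 * r / 4) • e‖ + ‖z - (3 * r / 4) • e‖ := by
          nth_rw 1 [hdecomp]; exact norm_add_le _ _
      _ < r := by linarith
  · have hinner : ⟪e, z⟫ = 3 * r / 4 + ⟪e, z - (3 * r / 4) • e⟫ := by
      nth_rw 1 [hdecomp]
      rw [inner_add_right, real_inner_smul_right, real_inner_self_eq_norm_sq, he]
      ring
    have hlow := (abs_le.1 ((abs_real_inner_le_norm e (z - (3 * r / 4) • e)).trans_eq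
      (by rw [he, one_mul]))).1
    linarith

variable [MeasurableSpace E] [BorelSpace E] {μ : Measure E} {a : E → ℝ}

lemma le_integral_mul_exp_two_inner_sub [CompleteSpace E] [SecondCountableTopology E]
    (ha0 : ∀ z, 0 ≤ a z) (ha : Integrable a μ) (ha1 : ∫ z, a z ∂μ = 1)
    (hM : Integrable (fun z => ‖z‖ * a z) μ) {s R c : ℝ} (hs : 0 < s) {η : E} (hη : ‖η‖ ≤ c) :
    1 + 2 * ⟪η, ∫ z, a z • z ∂μ⟫ - R ^ 2 / s
        - ∫ z in {z : E | R < ‖z‖}, a z * (1 + 2 * c * ‖z‖) ∂μ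
      ≤ ∫ z, a z * Real.exp (2 * ⟪η, z⟫ - ‖z‖ ^ 2 / s) ∂μ := by
  have hS : MeasurableSet {z : E | R < ‖z‖} := measurableSet_lt measurable_const measurable_norm
  have hfirst : Integrable (fun z => a z • z) μ :=
    hM.mono' (ha.aestronglyMeasurable.smul aestronglyMeasurable_id) (ae_of_all _ fun z => by
      rw [norm_smul, Real.norm_of_nonneg (ha0 z), mul_comm])
  have htail := ha.mul_one_add_mul_norm hM (2 * c)
  have hinner : Integrable (fun z => 2 * ⟪η, a z • z⟫) μ := (hfirst.const_inner η).const_mul 2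
  have hsum : Integrable (fun z => a z + 2 * ⟪η, a z • z⟫) μ := ha.add hinner
  have hmain : Integrable (fun z => a z + 2 * ⟪η, a z • z⟫ - R ^ 2 / s * a z) μ :=
    hsum.sub (ha.const_mul _)
  have hind := htail.indicator hS
  calc _ = ∫ z, (a z + 2 * ⟪η, a z • z⟫ - R ^ 2 / s * a z
          - {z : E | R < ‖z‖}.indicator (fun z => a z * (1 + 2 * c * ‖z‖)) z) ∂μ := by
        rw [integral_sub hmain hind, integral_sub hsum (ha.const_mul _),
          integral_add ha hinner, integral_const_mul, integral_const_mul, integral_inner hfirst,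
          integral_indicator hS, ha1]
        ring
    _ ≤ _ := by
      refine integral_mono (hmain.sub hind) (ha.mul_exp_two_inner_sub hs η) fun z => ?_
      have h := mul_le_mul_of_nonneg_left
        (one_add_two_inner_sub_indicator_le_exp (R := R) hs hη z) (ha0 z)
      simp only [real_inner_smul_right, Set.indicator_mul_right] at h ⊢
      linarith

lemma mul_measureReal_ball_mul_exp_le_integral [FiniteDimensional ℝ E] [μ.IsAddHaarMeasure]
    (ha0 : ∀ z, 0 ≤ a z) (ha : Integrable a μ) {ρ : ℝ} (hρ : 0 < ρ)
    (haρ : ∀ᵐ z ∂μ, z ∈ Metric.ball 0 ρ → ρ ≤ a z) {s : ℝ} (hs : 0 < s) {η : E}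
    (hρη : 2 * ρ / s ≤ ‖η‖) :
    ρ * μ.real (Metric.ball 0 (ρ / 4)) * Real.exp (ρ / 2 * ‖η‖)
      ≤ ∫ z, a z * Real.exp (2 * ⟪η, z⟫ - ‖z‖ ^ 2 / s) ∂μ := by
  have hη : 0 < ‖η‖ := lt_of_lt_of_le (by positivity) hρη
  set e := ‖η‖⁻¹ • η with he_def
  have he : ‖e‖ = 1 := by rw [norm_smul, norm_inv, norm_norm, inv_mul_cancel₀ hη.ne']
  set S := Metric.ball ((3 * ρ / 4) • e) (ρ / 4) with hS_def
  have hint := ha.mul_exp_two_inner_sub hs η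
  have hpoint : ∀ᵐ z ∂μ.restrict S,
      ρ * Real.exp (ρ / 2 * ‖η‖) ≤ a z * Real.exp (2 * ⟪η, z⟫ - ‖z‖ ^ 2 / s) := by
    filter_upwards [ae_restrict_mem measurableSet_ball, ae_restrict_of_ae haρ] with z hzS hza
    obtain ⟨hzρ, hez⟩ := norm_lt_and_half_le_inner_of_mem_ball he hzS
    have haz := hza (mem_ball_zero_iff.2 hzρ)
    have hinner : ρ * ‖η‖ ≤ 2 * ⟪η, z⟫ := by
      rw [he_def, real_inner_smul_left] at hez
      rw [← mul_inv_cancel_left₀ hη.ne' ⟪η, z⟫]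
      nlinarith
    have hnorm : ‖z‖ ^ 2 / s ≤ ρ / 2 * ‖η‖ := by
      rw [div_le_iff₀ hs] at hρη ⊢; nlinarith [norm_nonneg z]
    exact mul_le_mul haz (Real.exp_le_exp.2 (by linarith)) (Real.exp_pos _).le (hρ.le.trans haz)
  calc ρ * μ.real (Metric.ball 0 (ρ / 4)) * Real.exp (ρ / 2 * ‖η‖)
      = ∫ _ in S, ρ * Real.exp (ρ / 2 * ‖η‖) ∂μ := by
        rw [setIntegral_const, smul_eq_mul, hS_def,
          Measure.addHaar_real_ball_center μ ((3 * ρ / 4) • e)]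
        ring
    _ ≤ ∫ z in S, a z * Real.exp (2 * ⟪η, z⟫ - ‖z‖ ^ 2 / s) ∂μ :=
        integral_mono_ae (integrableOn_const measure_ball_lt_top.ne) hint.integrableOn hpoint
    _ ≤ _ := setIntegral_le_integral hint
        (ae_of_all _ fun z => mul_nonneg (ha0 z) (Real.exp_pos _).le)

lemma sq_add_inner_le_integral_of_norm_le [CompleteSpace E] [SecondCountableTopology E]
    (ha0 : ∀ z, 0 ≤ a z) (ha : Integrable a μ) (ha1 : ∫ z, a z ∂μ = 1)
    (hM : Integrable (fun z => ‖z‖ * a z) μ) {κ m α s R c : ℝ} (hκ : 0 ≤ κ) (hα : 0 ≤ α)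
    (hs : 0 < s) {η : E} (hη : ‖η‖ ≤ c)
    (hsmall : α * c ^ 2 + κ * (R ^ 2 / s)
      + κ * ∫ z in {z : E | R < ‖z‖}, a z * (1 + 2 * c * ‖z‖) ∂μ ≤ κ - m) :
    α * ‖η‖ ^ 2 + 2 * ⟪η, κ • ∫ z, a z • z ∂μ⟫ + m
      ≤ κ * ∫ z, a z * Real.exp (2 * ⟪η, z⟫ - ‖z‖ ^ 2 / s) ∂μ := by
  have hlow := mul_le_mul_of_nonneg_left
    (le_integral_mul_exp_two_inner_sub ha0 ha ha1 hM (R := R) hs hη) hκ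
  have hη2 : α * ‖η‖ ^ 2 ≤ α * c ^ 2 :=
    mul_le_mul_of_nonneg_left (pow_le_pow_left₀ (norm_nonneg η) hη 2) hα
  rw [real_inner_smul_right]
  linarith

lemma sq_add_inner_le_integral_of_le_norm [FiniteDimensional ℝ E] [μ.IsAddHaarMeasure]
    (ha0 : ∀ z, 0 ≤ a z) (ha : Integrable a μ) {ρ : ℝ} (hρ : 0 < ρ)
    (haρ : ∀ᵐ z ∂μ, z ∈ Metric.ball 0 ρ → ρ ≤ a z) {κ m α s : ℝ} (hκ : 0 ≤ κ) (hα : α ≤ 1)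
    (hs : 0 < s) {η : E} (hρη : 2 * ρ / s ≤ ‖η‖)
    (hgrowth : ‖η‖ ^ 2 + 2 * κ * ‖∫ z, a z • z ∂μ‖ * ‖η‖ + m
      ≤ κ * ρ * μ.real (Metric.ball 0 (ρ / 4)) * Real.exp (ρ / 2 * ‖η‖)) :
    α * ‖η‖ ^ 2 + 2 * ⟪η, κ • ∫ z, a z • z ∂μ⟫ + m
      ≤ κ * ∫ z, a z * Real.exp (2 * ⟪η, z⟫ - ‖z‖ ^ 2 / s) ∂μ := by
  have hlow := mul_le_mul_of_nonneg_left
    (mul_measureReal_ball_mul_exp_le_integral ha0 ha hρ haρ hs hρη) hκ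
  have hinner := mul_le_mul_of_nonneg_left (real_inner_le_norm η (∫ z, a z • z ∂μ)) hκ
  have hα2 : α * ‖η‖ ^ 2 ≤ ‖η‖ ^ 2 := mul_le_of_le_one_left (sq_nonneg _) hα
  rw [real_inner_smul_right]
  linarith

end Kernel

section Subsolution

variable {E : Type*} [NormedAddCommGroup E] [InnerProductSpace ℝ E] [FiniteDimensional ℝ E]
  [MeasurableSpace E] [BorelSpace E] {μ : Measure E} [μ.IsAddHaarMeasure] {a : E → ℝ}

theorem exists_sq_add_inner_le_integral_mul_exp {κ m : ℝ} (hκ : 0 < κ) (hmκ : m < κ)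
    (ha0 : ∀ z, 0 ≤ a z) (ha : Integrable a μ) (ha1 : ∫ z, a z ∂μ = 1)
    (hM : Integrable (fun z => ‖z‖ * a z) μ)
    (haρ : ∃ ρ > 0, ∀ᵐ z ∂μ, z ∈ Metric.ball 0 ρ → ρ ≤ a z) :
    ∃ α₀ > 0, ∃ s₀ > 0, ∀ α ∈ Set.Ioo 0 α₀, ∀ s > s₀, ∀ η : E,
      α * ‖η‖ ^ 2 + 2 * ⟪η, κ • ∫ z, a z • z ∂μ⟫ + m
        ≤ κ * ∫ z, a z * Real.exp (2 * ⟪η, z⟫ - ‖z‖ ^ 2 / s) ∂μ := by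
  obtain ⟨ρ, hρ, haρ⟩ := haρ
  have hβ : 0 < κ - m := sub_pos.2 hmκ
  have hV : 0 < μ.real (Metric.ball 0 (ρ / 4)) :=
    ENNReal.toReal_pos (Metric.measure_ball_pos μ 0 (by positivity)).ne' measure_ball_lt_top.ne
  obtain ⟨c₀, hc₀⟩ := (eventually_sq_add_mul_add_le_mul_exp (half_pos hρ)
    (by positivity : 0 < κ * ρ * μ.real (Metric.ball 0 (ρ / 4)))
    (2 * κ * ‖∫ z, a z • z ∂μ‖) m).exists_forall_of_atTop
  -- `c` separates the two regimes of `η`; in the bounded one, `α₀`, `s₀` and `R` keep each of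
  -- the three error terms of `sq_add_inner_le_integral_of_norm_le` below `(κ - m) / 3`.
  set c := max c₀ 1
  have hc : 0 < c := lt_of_lt_of_le one_pos (le_max_right _ _)
  obtain ⟨R, hR⟩ := ((tendsto_setIntegral_lt_norm_atTop
    (ha.mul_one_add_mul_norm hM (2 * c))).eventually
      (gt_mem_nhds (by positivity : 0 < (κ - m) / (3 * κ)))).exists
  refine ⟨min 1 ((κ - m) / (3 * c ^ 2)), by positivity, max (3 * κ * R ^ 2 / (κ - m)) (2 * ρ / c),
    lt_max_of_lt_right (by positivity), ?_⟩
  rintro α ⟨hα0, hα⟩ s hs η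
  have hs0 : 0 < s := lt_of_lt_of_le (by positivity) ((le_max_right _ _).trans hs.le)
  rcases le_or_gt ‖η‖ c with hη | hη
  · refine sq_add_inner_le_integral_of_norm_le ha0 ha ha1 hM (R := R) hκ.le hα0.le hs0 hη ?_
    have hαc : α * c ^ 2 < (κ - m) / 3 := by
      have := (lt_div_iff₀ (by positivity)).1 (hα.trans_le (min_le_right _ _))
      linarith
    have hsR : κ * (R ^ 2 / s) < (κ - m) / 3 := by
      have := (div_lt_iff₀ hβ).1 ((le_max_left _ _).trans_lt hs)
      rw [mul_div_assoc', div_lt_iff₀ hs0]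
      linarith
    have htail := (lt_div_iff₀ (by positivity)).1 hR
    linarith
  · refine sq_add_inner_le_integral_of_le_norm ha0 ha hρ haρ hκ.le
      ((hα.trans_le (min_le_left _ _)).le) hs0 ?_ (hc₀ _ ((le_max_left _ _).trans hη.le))
    have hρs := (div_lt_iff₀ hc).1 ((le_max_right _ _).trans_lt hs)
    exact ((div_lt_iff₀ hs0).2 (by linarith)).le.trans hη.le

end Subsolution

theorem statement13_general (d : ℕ) (κ m : ℝ) (hκ : 0 < κ)
    (a : EucSp d → ℝ) (ha0 : ∀ x, 0 ≤ a x) (haI : Integrable a)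
    (haN : (∫ x, a x) = 1)
    (hA1 : m < κ) (hA5 : assumA5 a) (hA9 : assumA9 a)
    (𝔪 : EucSp d) (h𝔪 : 𝔪 = κ • ∫ y, a y • y) :
    ∃ α₀ > (0 : ℝ), ∀ α ∈ Set.Ioo (0 : ℝ) α₀, ∃ T > (0 : ℝ), ∀ q > (0 : ℝ),
      ∀ x : EucSp d, ∀ t > T,
        deriv (fun s : ℝ => q * Real.exp (-‖x - s • 𝔪‖ ^ 2 / (α * s))) t
          - κ * (∫ y, a (x - y) * (q * Real.exp (-‖y - t • 𝔪‖ ^ 2 / (α * t))))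
          + m * (q * Real.exp (-‖x - t • 𝔪‖ ^ 2 / (α * t))) ≤ 0 := by
  obtain ⟨α₀, hα₀, s₀, hs₀, hineq⟩ :=
    exists_sq_add_inner_le_integral_mul_exp hκ hA1 ha0 haI haN hA9 hA5
  refine ⟨α₀, hα₀, fun α hα => ⟨s₀ / α, div_pos hs₀ hα.1, fun q hq x t ht => ?_⟩⟩
  have hαt : s₀ < α * t := (div_lt_iff₀' hα.1).1 ht
  have ht0 : 0 < t := pos_of_mul_pos_right (hs₀.trans hαt) hα.1.le
  have hW : 0 < q * Real.exp (-‖x - t • 𝔪‖ ^ 2 / (α * t)) := by positivity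
  have hI := hineq α hα (α * t) hαt ((α * t)⁻¹ • (x - t • 𝔪))
  rw [← h𝔪] at hI
  simp_rw [mul_left_comm (a _) q]
  rw [((hasDerivAt_exp_neg_norm_sub_smul_sq_div hα.1.ne' ht0.ne' x 𝔪).const_mul q).deriv,
    integral_const_mul, integral_comp_sub_mul_exp_neg_norm_sub_sq_div a (mul_pos hα.1 ht0).ne']
  nlinarith [mul_le_mul_of_nonneg_left hI hW.le]

/-- A Gaussian subsolution for the linearized equation `∂ₜv = κ a∗v − m v`
(Proposition `subsolutiontolinear`). -/
theorem statement13 (d : ℕ) (hd : 1 ≤ d) (κ m : ℝ) (hκ : 0 < κ) (hm : 0 < m)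
    (a : EucSp d → ℝ) (ha0 : ∀ x, 0 ≤ a x) (haI : Integrable a)
    (haN : (∫ x, a x) = 1)
    (hA1 : m < κ) (hA5 : assumA5 a) (hA9 : assumA9 a)
    (𝔪 : EucSp d) (h𝔪 : 𝔪 = κ • ∫ y, a y • y) :
    ∃ α₀ > (0 : ℝ), ∀ α ∈ Set.Ioo (0 : ℝ) α₀, ∃ T > (0 : ℝ), ∀ q > (0 : ℝ),
      ∀ x : EucSp d, ∀ t > T,
        deriv (fun s : ℝ => q * Real.exp (-‖x - s • 𝔪‖ ^ 2 / (α * s))) t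
          - κ * (∫ y, a (x - y) * (q * Real.exp (-‖y - t • 𝔪‖ ^ 2 / (α * t))))
          + m * (q * Real.exp (-‖x - t • 𝔪‖ ^ 2 / (α * t))) ≤ 0 :=
  statement13_general d κ m hκ a ha0 haI haN hA1 hA5 hA9 𝔪 h𝔪

end
end
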